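/- arXiv:2604.07001 — 9 statements merged into one kernel-verified Lean document; each statement's English description precedes it below -/
import Mathlib

section
/- Let G be an infinite group acting sharply 3-transitively on a set X (i.e., for any two triples of pairwise distinct elements of X there is a unique element of G mapping the first triple to the second). If g ∈ G has order 3, then the centraliser of g in G is infinite. -/
/-- If an infinite group `G` acts sharply 3-transitively on a set `X`, then the
centraliser of any element of order 3 is infinite. -/
theorem stmt_0 (G X : Type*) [Group G] [Infinite G] [MulAction G X]
    (hcard : ∃ a b c : X, a ≠ b ∧ a ≠ c ∧ b ≠ c)
    (hsharp : ∀ x₁ x₂ x₃ y₁ y₂ y₃ : X, x₁ ≠ x₂ → x₁ ≠ x₃ → x₂ ≠ x₃ →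
      y₁ ≠ y₂ → y₁ ≠ y₃ → y₂ ≠ y₃ →
      ∃! g : G, g • x₁ = y₁ ∧ g • x₂ = y₂ ∧ g • x₃ = y₃)
    (g : G) (hg : orderOf g = 3) :
    Infinite (Subgroup.centralizer {g}) := by
  classical
  have hg1 : g ≠ 1 := by
    intro h; rw [h, orderOf_one] at hg; omega
  have hg3 : g ^ 3 = 1 := by rw [← hg]; exact pow_orderOf_eq_one g
  have hgg : ∀ x : X, g • g • g • x = x := by
    intro x
    have : (g ^ 3) • x = x := by rw [hg3, one_smul]
    rw [← this, ← mul_smul, ← mul_smul]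
    congr 1
    rw [pow_succ, pow_succ, pow_one]
  -- distinctness of a 3-cycle
  have key : ∀ x : X, g • x ≠ x →
      x ≠ g • x ∧ x ≠ g • g • x ∧ g • x ≠ g • g • x := by
    intro x hx
    refine ⟨Ne.symm hx, ?_, fun h => hx (MulAction.injective g h).symm⟩
    intro h
    apply hx
    calc g • x = g • g • g • x := by rw [← h]
    _ = x := hgg x
  -- X is infinite
  haveI hXinf : Infinite X := by
    obtain ⟨a, b, c, hab, hac, hbc⟩ := hcard
    by_contra hX
    rw [not_infinite_iff_finite] at hX
    haveI := hX
    have hinj : Function.Injective (fun h : G => ((h • a, h • b, h • c) : X × X × X)) := by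
      intro h1 h2 heq
      simp only [Prod.mk.injEq] at heq
      obtain ⟨e1, e2, e3⟩ := heq
      obtain ⟨u, _, huniq⟩ := hsharp a b c (h2 • a) (h2 • b) (h2 • c) hab hac hbc
        (fun h => hab (MulAction.injective h2 h))
        (fun h => hac (MulAction.injective h2 h))
        (fun h => hbc (MulAction.injective h2 h))
      exact (huniq h1 ⟨e1, e2, e3⟩).trans (huniq h2 ⟨rfl, rfl, rfl⟩).symm
    haveI : Finite G := Finite.of_injective _ hinj
    exact not_finite G
  -- the set of moved points is infinite
  have hmoved : Set.Infinite {x : X | g • x ≠ x} := by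
    by_contra hfin
    rw [Set.not_infinite] at hfin
    have hS : Set.Infinite ({x : X | g • x ≠ x}ᶜ) := hfin.infinite_compl
    obtain ⟨t, hts, ht3⟩ := hS.exists_subset_card_eq 3
    obtain ⟨x, y, z, hxy, hxz, hyz, rfl⟩ := Finset.card_eq_three.mp ht3
    have hx : g • x = x := not_not.mp (hts (by simp))
    have hy : g • y = y := not_not.mp (hts (by simp))
    have hz : g • z = z := not_not.mp (hts (by simp))
    obtain ⟨u, _, huniq⟩ := hsharp x y z x y z hxy hxz hyz hxy hxz hyz
    exact hg1 ((huniq g ⟨hx, hy, hz⟩).trans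
      (huniq 1 ⟨one_smul _ _, one_smul _ _, one_smul _ _⟩).symm)
  obtain ⟨a, ha⟩ := hmoved.nonempty
  obtain ⟨ha1, ha2, ha3⟩ := key a ha
  -- for each moved x, construct a centralizing element sending a to x
  have construct : ∀ x : X, g • x ≠ x →
      ∃ h : G, h • a = x ∧ h ∈ Subgroup.centralizer {g} := by
    intro x hx
    obtain ⟨k1, k2, k3⟩ := key x hx
    obtain ⟨h, ⟨e1, e2, e3⟩, _⟩ := hsharp a (g • a) (g • g • a) x (g • x) (g • g • x)
      ha1 ha2 ha3 k1 k2 k3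
    obtain ⟨u, _, uuniq⟩ := hsharp a (g • a) (g • g • a) (g • x) (g • g • x) x
      ha1 ha2 ha3 k3 hx (Ne.symm k2)
    have h1 : g * h = u := by
      refine uuniq (g * h) ⟨?_, ?_, ?_⟩
      · rw [mul_smul, e1]
      · rw [mul_smul, e2]
      · rw [mul_smul, e3, hgg]
    have h2 : h * g = u := by
      refine uuniq (h * g) ⟨?_, ?_, ?_⟩
      · rw [mul_smul, e2]
      · rw [mul_smul, e3]
      · rw [mul_smul, hgg, e1]
    refine ⟨h, e1, ?_⟩
    rw [Subgroup.mem_centralizer_iff]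
    intro c hc
    rw [Set.mem_singleton_iff] at hc
    subst hc
    rw [h1, h2]
  -- build the injection
  haveI : Infinite ({x : X | g • x ≠ x}) := Set.infinite_coe_iff.mpr hmoved
  let F : {x : X | g • x ≠ x} → Subgroup.centralizer {g} := fun x =>
    ⟨(construct x.1 x.2).choose, ((construct x.1 x.2).choose_spec).2⟩
  have hFinj : Function.Injective F := by
    intro x y hxy
    have hx := ((construct x.1 x.2).choose_spec).1
    have hy := ((construct y.1 y.2).choose_spec).1
    have : (construct x.1 x.2).choose = (construct y.1 y.2).choose :=
      congrArg Subtype.val hxy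
    apply Subtype.ext
    rw [← hx, ← hy, this]
  exact Infinite.of_injective F hFinj
end

section
/- Every element of order 3 in GL₂(ℤ) is conjugate in GL₂(ℤ) to the matrix M = [[0,-1],[1,-1]]. -/
open Matrix

private lemma key_step (n : ℕ) : ∀ a b c d : ℤ, a + d = -1 → a * d - b * c = 1 →
    0 < c → c ≤ (n : ℤ) →
    ∃ P : Matrix (Fin 2) (Fin 2) ℤ, (P.det = 1 ∨ P.det = -1) ∧
      P * !![0, -1; 1, -1] = !![a, b; c, d] * P := by
  induction n with
  | zero => intro a b c d _ _ hc hn; omega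
  | succ n ih =>
    intro a b c d htr hdet hc hn
    set k : ℤ := (d - a + c) / (2 * c) with hk
    have hmod1 : 0 ≤ (d - a + c) % (2 * c) := Int.emod_nonneg _ (by omega)
    have hmod2 : (d - a + c) % (2 * c) < 2 * c := Int.emod_lt_of_pos _ (by omega)
    have hdiv : d - a + c = 2 * c * k + (d - a + c) % (2 * c) :=
      (Int.mul_ediv_add_emod _ _).symm
    have hkc : 2 * c * k = 2 * (k * c) := by ring
    set a' : ℤ := a + k * c with ha'
    set d' : ℤ := d - k * c with hd'
    set b' : ℤ := b + k * (d - a) - k * k * c with hb'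
    have htr' : a' + d' = -1 := by rw [ha', hd']; omega
    have hdet' : a' * d' - b' * c = 1 := by
      rw [ha', hd', hb']; linear_combination hdet
    have hBval : d' - a' = (d - a + c) % (2 * c) - c := by
      rw [ha', hd']; omega
    have hB1 : -c ≤ d' - a' := by omega
    have hB2 : d' - a' < c := by omega
    have hTM : !![1, -k; 0, 1] * !![a', b'; c, d'] =
        !![a, b; c, d] * !![1, -k; 0, 1] := by
      rw [ha', hd', hb']
      ext i j; fin_cases i <;> fin_cases j <;>
        simp [Matrix.mul_apply, Fin.sum_univ_two] <;> ring
    have hdetT : (!![1, -k; 0, 1] : Matrix (Fin 2) (Fin 2) ℤ).det = 1 := by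
      simp [Matrix.det_fin_two_of]
    rcases le_or_gt c 1 with hc1 | hc2
    · -- c = 1, reduced matrix is exactly the companion matrix
      have hc1 : c = 1 := by omega
      have hB : d' - a' = -1 := by omega
      have ha0 : a' = 0 := by omega
      have hd0 : d' = -1 := by omega
      have hb0 : b' = -1 := by
        have := hdet'; rw [ha0, hd0, hc1] at this; omega
      refine ⟨!![1, -k; 0, 1], Or.inl hdetT, ?_⟩
      rw [← hTM, ha0, hb0, hc1, hd0]
    · -- c ≥ 2, swap and recurse
      have h4 : 4 * c * (-b') = (d' - a') ^ 2 + 3 := by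
        linear_combination 4 * hdet' + (1 - a' - d') * htr'
      have hsq : (d' - a') ^ 2 ≤ c ^ 2 := by
        nlinarith [mul_nonneg (by linarith : (0:ℤ) ≤ c + (d' - a'))
          (by linarith : (0:ℤ) ≤ c - (d' - a'))]
      have he1 : 0 < -b' := by nlinarith [sq_nonneg (d' - a')]
      have he2 : -b' < c := by nlinarith
      obtain ⟨P, hPdet, hP⟩ := ih d' (-c) (-b') a' (by omega)
        (by linear_combination hdet') he1 (by omega)
      have hSM : !![0, -1; 1, 0] * !![d', -c; -b', a'] =
          !![a', b'; c, d'] * !![0, -1; 1, 0] := by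
        ext i j; fin_cases i <;> fin_cases j <;>
          simp [Matrix.mul_apply, Fin.sum_univ_two] <;> ring
      have hdetS : (!![0, -1; 1, 0] : Matrix (Fin 2) (Fin 2) ℤ).det = 1 := by
        simp [Matrix.det_fin_two_of]
      refine ⟨!![1, -k; 0, 1] * !![0, -1; 1, 0] * P, ?_, ?_⟩
      · rw [Matrix.det_mul, Matrix.det_mul, hdetT, hdetS]
        simpa using hPdet
      · calc !![1, -k; 0, 1] * !![0, -1; 1, 0] * P * !![0, -1; 1, -1]
            = !![1, -k; 0, 1] * (!![0, -1; 1, 0] * (P * !![0, -1; 1, -1])) := by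
              simp only [mul_assoc]
          _ = !![1, -k; 0, 1] * (!![0, -1; 1, 0] * (!![d', -c; -b', a'] * P)) := by
              rw [hP]
          _ = !![1, -k; 0, 1] * (!![0, -1; 1, 0] * !![d', -c; -b', a']) * P := by
              simp only [mul_assoc]
          _ = !![1, -k; 0, 1] * (!![a', b'; c, d'] * !![0, -1; 1, 0]) * P := by
              rw [hSM]
          _ = (!![1, -k; 0, 1] * !![a', b'; c, d']) * (!![0, -1; 1, 0] * P) := by
              simp only [mul_assoc]
          _ = (!![a, b; c, d] * !![1, -k; 0, 1]) * (!![0, -1; 1, 0] * P) := by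
              rw [hTM]
          _ = !![a, b; c, d] * (!![1, -k; 0, 1] * !![0, -1; 1, 0] * P) := by
              simp only [mul_assoc]

private lemma key_main (a b c d : ℤ) (htr : a + d = -1) (hdet : a * d - b * c = 1) :
    ∃ P : Matrix (Fin 2) (Fin 2) ℤ, (P.det = 1 ∨ P.det = -1) ∧
      P * !![0, -1; 1, -1] = !![a, b; c, d] * P := by
  have hc0 : c ≠ 0 := by
    intro h
    rw [h] at hdet
    nlinarith [sq_nonneg (a - d)]
  rcases lt_or_gt_of_ne hc0 with hneg | hpos
  · obtain ⟨P, hPdet, hP⟩ := key_step (-c).toNat a (-b) (-c) d htr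
      (by linear_combination hdet) (by omega) (by omega)
    have hDM : !![(1:ℤ), 0; 0, -1] * !![a, -b; -c, d] =
        !![a, b; c, d] * !![(1:ℤ), 0; 0, -1] := by
      ext i j; fin_cases i <;> fin_cases j <;>
        simp [Matrix.mul_apply, Fin.sum_univ_two]
    have hdetD : (!![(1:ℤ), 0; 0, -1] : Matrix (Fin 2) (Fin 2) ℤ).det = -1 := by
      simp [Matrix.det_fin_two_of]
    refine ⟨!![(1:ℤ), 0; 0, -1] * P, ?_, ?_⟩
    · rw [Matrix.det_mul, hdetD]
      rcases hPdet with h | h <;> rw [h] <;> norm_num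
    · calc !![(1:ℤ), 0; 0, -1] * P * !![0, -1; 1, -1]
          = !![(1:ℤ), 0; 0, -1] * (P * !![0, -1; 1, -1]) := by
            simp only [mul_assoc]
        _ = !![(1:ℤ), 0; 0, -1] * !![a, -b; -c, d] * P := by
            rw [hP]; simp only [mul_assoc]
        _ = !![a, b; c, d] * (!![(1:ℤ), 0; 0, -1] * P) := by
            rw [hDM]; simp only [mul_assoc]
  · exact key_step c.toNat a b c d htr hdet hpos (by omega)

/-- Every element of order 3 in `GL₂(ℤ)` is conjugate to `!![0,-1; 1,-1]`. -/
theorem stmt_3 (M₀ : GL (Fin 2) ℤ)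
    (hM₀ : (M₀ : Matrix (Fin 2) (Fin 2) ℤ) = !![0, -1; 1, -1])
    (M : GL (Fin 2) ℤ) (hM : orderOf M = 3) :
    IsConj M₀ M := by
  set A : Matrix (Fin 2) (Fin 2) ℤ := (M : Matrix (Fin 2) (Fin 2) ℤ) with hA
  have hM3 : M ^ 3 = 1 := by rw [← hM]; exact pow_orderOf_eq_one M
  have hA3 : A * A * A = 1 := by
    have h := congrArg (Units.val) hM3
    rw [Units.val_pow_eq_pow_val] at h
    simpa [pow_succ, mul_assoc] using h
  have hMne : M ≠ 1 := by
    intro h; rw [h] at hM; simp at hM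
  have hAne : A ≠ 1 := by
    intro h; exact hMne (Units.ext h)
  set a : ℤ := A 0 0 with ha
  set b : ℤ := A 0 1 with hb
  set c : ℤ := A 1 0 with hc
  set d : ℤ := A 1 1 with hd
  have hAeta : A = !![a, b; c, d] := Matrix.eta_fin_two A
  have hu : a * d - b * c = 1 ∨ a * d - b * c = -1 := by
    have h1 : IsUnit A := M.isUnit
    have h2 : IsUnit A.det := (Matrix.isUnit_iff_isUnit_det A).mp h1
    rw [hAeta, Matrix.det_fin_two_of] at h2
    exact Int.isUnit_iff.mp h2
  -- entrywise equations of A^3 = 1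
  have E : (a*a + b*c) * a + (b*(a+d)) * c = 1 ∧
      (a*a + b*c) * b + (b*(a+d)) * d = 0 ∧
      (c*(a+d)) * a + (d*d + b*c) * c = 0 ∧
      (c*(a+d)) * b + (d*d + b*c) * d = 1 := by
    rw [hAeta] at hA3
    have h2 : !![a, b; c, d] * !![a, b; c, d] =
        !![a*a + b*c, b*(a+d); c*(a+d), d*d + b*c] := by
      ext i j; fin_cases i <;> fin_cases j <;>
        simp [Matrix.mul_apply, Fin.sum_univ_two] <;> ring
    rw [h2] at hA3
    have h3 : !![a*a + b*c, b*(a+d); c*(a+d), d*d + b*c] * !![a, b; c, d] =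
        !![(a*a + b*c) * a + (b*(a+d)) * c, (a*a + b*c) * b + (b*(a+d)) * d;
           (c*(a+d)) * a + (d*d + b*c) * c, (c*(a+d)) * b + (d*d + b*c) * d] := by
      ext i j; fin_cases i <;> fin_cases j <;>
        simp [Matrix.mul_apply, Fin.sum_univ_two]
    rw [h3] at hA3
    refine ⟨?_, ?_, ?_, ?_⟩ <;> [
      (have := congrFun (congrFun hA3 0) 0);
      (have := congrFun (congrFun hA3 0) 1);
      (have := congrFun (congrFun hA3 1) 0);
      (have := congrFun (congrFun hA3 1) 1)] <;> simpa using this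
  obtain ⟨E1, E2, E3, E4⟩ := E
  have htrdet : a + d = -1 ∧ a * d - b * c = 1 := by
    by_cases hK : a*a + a*d + d*d + b*c = 0
    · -- minimal polynomial is x^2+x+1 : trace² = det
      have hδ : a * d - b * c = (a + d) ^ 2 := by linear_combination -hK
      have hδ1 : a * d - b * c = 1 := by
        rcases hu with h | h
        · exact h
        · exfalso; nlinarith [sq_nonneg (a + d)]
      have ht2 : (a + d) * (a + d) = 1 := by linear_combination hδ1 - hδ
      have ht : a + d = 1 ∨ a + d = -1 :=
        Int.isUnit_iff.mp (IsUnit.of_mul_eq_one _ ht2)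
      rcases ht with h | h
      · exfalso
        have hcontra : (-4 : ℤ) = 0 := by
          linear_combination E1 + E4 + (3*(a+d)) * hδ1 - ((a+d-1)*(a+d+2)) * h
        norm_num at hcontra
      · exact ⟨h, hδ1⟩
    · exfalso
      have hb0 : b = 0 := by
        rcases mul_eq_zero.mp (show b * (a*a + a*d + d*d + b*c) = 0 by
          linear_combination E2) with h | h
        · exact h
        · exact absurd h hK
      have hc0 : c = 0 := by
        rcases mul_eq_zero.mp (show c * (a*a + a*d + d*d + b*c) = 0 by
          linear_combination E3) with h | h
        · exact h
        · exact absurd h hK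
      have ha1 : a = 1 := by
        have h1 : a * (a * a) = 1 := by rw [hb0, hc0] at E1; linear_combination E1
        rcases Int.isUnit_iff.mp (IsUnit.of_mul_eq_one _ h1) with h | h
        · exact h
        · exfalso; rw [h] at h1; norm_num at h1
      have hd1 : d = 1 := by
        have h1 : d * (d * d) = 1 := by rw [hb0, hc0] at E4; linear_combination E4
        rcases Int.isUnit_iff.mp (IsUnit.of_mul_eq_one _ h1) with h | h
        · exact h
        · exfalso; rw [h] at h1; norm_num at h1
      apply hAne
      rw [hAeta, ha1, hb0, hc0, hd1]
      exact Matrix.one_fin_two.symm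
  obtain ⟨P, hPdet, hP⟩ := key_main a b c d htrdet.1 htrdet.2
  have hPunit : IsUnit P := by
    rw [Matrix.isUnit_iff_isUnit_det, Int.isUnit_iff]
    exact hPdet
  have hcoe : (hPunit.unit : Matrix (Fin 2) (Fin 2) ℤ) = P := hPunit.unit_spec
  refine ⟨toUnits hPunit.unit, ?_⟩
  show (hPunit.unit : GL (Fin 2) ℤ) * M₀ = M * hPunit.unit
  apply Units.ext
  rw [Units.val_mul, Units.val_mul, hcoe, hM₀, ← hA, hAeta, hP]
end

section
/- The centraliser in GL₃(ℤ) of any element of order 3 is a finite group. -/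
open Matrix Polynomial

noncomputable section
namespace Stmt4

lemma quad_pos (r : ℚ) : 0 < r^2 + r + 1 := by nlinarith [sq_nonneg (r + 1/2)]

lemma quad_zero {a b : ℚ} (h : a^2 - a*b + b^2 = 0) : a = 0 ∧ b = 0 := by
  constructor <;> nlinarith [sq_nonneg (a-b), sq_nonneg a, sq_nonneg b]

lemma p35_irred : Irreducible ((X:ℚ[X])^2 + X + 1) := by
  have hc := Polynomial.cyclotomic_three ℚ
  have := Polynomial.cyclotomic.irreducible_rat (n := 3) (by norm_num)
  rwa [hc] at this

end Stmt4

namespace Stmt4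
open Polynomial Matrix

abbrev V3 := Fin 3 → ℚ
abbrev M3 := Matrix (Fin 3) (Fin 3) ℚ

-- eigenvector from root of charpoly
lemma eigen_of_root (m : M3) {r : ℚ} (h : m.charpoly.eval r = 0) :
    ∃ v : V3, v ≠ 0 ∧ m.mulVec v = r • v := by
  have hdet : (r • (1:M3) - m).det = 0 := by
    have : m.charpoly.eval r = (r • (1:M3) - m).det := by
      rw [Matrix.charpoly, ← Polynomial.coe_evalRingHom, RingHom.map_det]
      congr 1
      ext i j
      by_cases hij : i = j
      · subst hij; simp [charmatrix_apply_eq, Matrix.smul_apply, Matrix.one_apply]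
      · simp [charmatrix_apply_ne _ _ _ hij, Matrix.smul_apply, Matrix.one_apply_ne hij]
    rwa [this] at h
  obtain ⟨v, hv, hmv⟩ := (Matrix.exists_mulVec_eq_zero_iff).mpr hdet
  refine ⟨v, hv, ?_⟩
  have := hmv
  rw [Matrix.sub_mulVec, Matrix.smul_mulVec, Matrix.one_mulVec, sub_eq_zero] at this
  exact this.symm

lemma hT_ne (m : M3) (hm0 : m * m + m + 1 = 0) : False := by
  set p : ℚ[X] := X^2 + X + 1 with hp
  have hpc : p = Polynomial.cyclotomic 3 ℚ := (Polynomial.cyclotomic_three ℚ).symm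
  have hpm : p.Monic := by rw [hpc]; exact Polynomial.cyclotomic.monic 3 ℚ
  have hpd : p.natDegree = 2 := by rw [hpc, Polynomial.natDegree_cyclotomic]; rfl
  have hpirr : Irreducible p := p35_irred
  have haevp : Polynomial.aeval m p = 0 := by
    simp [hp, map_add, map_pow, sq]
    simpa [sq] using hm0
  have haevc : Polynomial.aeval m m.charpoly = 0 := Matrix.aeval_self_charpoly m
  -- gcd argument : p ∣ charpoly
  set g := EuclideanDomain.gcd p m.charpoly with hg
  have hgdvd : g ∣ p := EuclideanDomain.gcd_dvd_left _ _
  have haevg : Polynomial.aeval m g = 0 := by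
    rw [hg, EuclideanDomain.gcd_eq_gcd_ab, map_add, _root_.map_mul, _root_.map_mul, haevp, haevc,
      zero_mul, zero_mul, add_zero]
  have hgnu : ¬ IsUnit g := by
    intro hu
    obtain ⟨h', hh'⟩ := hu.exists_right_inv
    have : Polynomial.aeval m (g * h') = 0 := by rw [_root_.map_mul, haevg, zero_mul]
    rw [hh', _root_.map_one] at this
    exact one_ne_zero this
  have hpg : p ∣ m.charpoly := by
    obtain ⟨k, hk⟩ := hgdvd
    rcases hpirr.isUnit_or_isUnit hk with hu | hu
    · exact absurd hu hgnu
    · obtain ⟨u, rfl⟩ := hu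
      have hpg' : p ∣ g := ⟨(↑u⁻¹ : ℚ[X]), by rw [hk]; exact (Units.mul_inv_cancel_right g u).symm⟩
      exact hpg'.trans (EuclideanDomain.gcd_dvd_right p m.charpoly)
  -- charpoly = p * (X + C a)
  have hcm : m.charpoly.Monic := Matrix.charpoly_monic m
  have hcd : m.charpoly.natDegree = 3 := by
    rw [Matrix.charpoly_natDegree_eq_dim]; rfl
  obtain ⟨h', hch⟩ := hpg
  have hh'm : h'.Monic := hpm.of_mul_monic_left (hch ▸ hcm)
  have hh'd : h'.natDegree = 1 := by
    have := Polynomial.natDegree_mul hpm.ne_zero hh'm.ne_zero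
    rw [← hch, hcd, hpd] at this
    omega
  obtain hXC := hh'm.eq_X_add_C hh'd
  set r : ℚ := -(h'.coeff 0) with hr
  have hh'r : h'.eval r = 0 := by rw [hXC]; simp [hr]
  have hcr : m.charpoly.eval r = 0 := by rw [hch, Polynomial.eval_mul, hh'r, mul_zero]
  obtain ⟨v, hv, hmv⟩ := eigen_of_root m hcr
  have h0 : (m * m + m + 1).mulVec v = 0 := by rw [hm0, Matrix.zero_mulVec]
  rw [Matrix.add_mulVec, Matrix.add_mulVec, Matrix.one_mulVec,
    ← Matrix.mulVec_mulVec, hmv, Matrix.mulVec_smul, hmv] at h0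
  have : (r^2 + r + 1) • v = 0 := by
    rw [← h0]; ext i; simp [Pi.smul_apply, smul_eq_mul]; ring
  rcases smul_eq_zero.mp this with h | h
  · exact absurd h (ne_of_gt (quad_pos r))
  · exact hv h

end Stmt4

namespace Stmt4
open Polynomial Matrix FiniteDimensional Module Submodule

lemma charpoly_eval (m : M3) (r : ℚ) : m.charpoly.eval r = (r • (1:M3) - m).det := by
  rw [Matrix.charpoly, ← Polynomial.coe_evalRingHom, RingHom.map_det]
  congr 1
  ext i j
  by_cases hij : i = j
  · subst hij; simp [charmatrix_apply_eq, Matrix.smul_apply, Matrix.one_apply]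
  · simp [charmatrix_apply_ne _ _ _ hij, Matrix.smul_apply, Matrix.one_apply_ne hij]

/-- a rational eigenvalue of an invertible integral matrix is an integer -/
lemma int_eigen (A : Matrix (Fin 3) (Fin 3) ℤ) {t : ℚ} {v : V3} (hv : v ≠ 0)
    (h : (A.map (Int.cast : ℤ → ℚ)) *ᵥ v = t • v) : ∃ n : ℤ, (n : ℚ) = t := by
  set Aq : M3 := A.map (Int.cast : ℤ → ℚ) with hAq
  have h0 : (t • (1:M3) - Aq) *ᵥ v = 0 := by
    rw [Matrix.sub_mulVec, Matrix.smul_mulVec, Matrix.one_mulVec, h, sub_self]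
  have hdet : (t • (1:M3) - Aq).det = 0 :=
    (Matrix.exists_mulVec_eq_zero_iff).mp ⟨v, hv, h0⟩
  have hroot : Aq.charpoly.eval t = 0 := by rw [charpoly_eval, hdet]
  have hint : IsIntegral ℤ t := by
    refine ⟨A.charpoly, A.charpoly_monic, ?_⟩
    rw [Polynomial.eval₂_eq_eval_map]
    have : A.charpoly.map (Int.castRingHom ℚ) = Aq.charpoly := (Matrix.charpoly_map A _).symm
    rw [show (algebraMap ℤ ℚ) = Int.castRingHom ℚ from rfl, this]
    exact hroot
  obtain ⟨n, hn⟩ := IsIntegrallyClosed.isIntegral_iff.mp hint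
  exact ⟨n, by simpa using hn⟩

end Stmt4

namespace Stmt4
open Polynomial Matrix Module Submodule

set_option maxHeartbeats 2000000 in
lemma key (m : M3) (hm3 : m ^ 3 = 1) (hm1 : m ≠ 1) :
    ∃ c : ℤ, ∀ A B : Matrix (Fin 3) (Fin 3) ℤ, A * B = 1 → B * A = 1 →
      (A.map (Int.cast : ℤ → ℚ)) * m = m * (A.map (Int.cast : ℤ → ℚ)) →
      ∀ i j, |A i j| ≤ c := by
  classical
  set T : M3 := m * m + m + 1 with hT
  have hfac1 : (m - 1) * T = 0 := by
    have : (m - 1) * T = m ^ 3 - 1 := by rw [hT]; noncomm_ring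
    rw [this, hm3, sub_self]
  have hfac2 : T * (m - 1) = 0 := by
    have : T * (m - 1) = m ^ 3 - 1 := by rw [hT]; noncomm_ring
    rw [this, hm3, sub_self]
  have hTm : T * m = m * T := by rw [hT]; noncomm_ring
  have hTne : T ≠ 0 := fun h => hT_ne m (by rw [← hT]; exact h)
  have hm1' : m - 1 ≠ 0 := sub_ne_zero.mpr hm1
  -- v₁ : eigenvector of m with eigenvalue 1
  obtain ⟨i₀, j₀, hij₀⟩ : ∃ i j, T i j ≠ 0 := by
    by_contra hc; push_neg at hc
    exact hTne (by ext i j; simpa using hc i j)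
  set v₁ : V3 := T *ᵥ Pi.single j₀ 1 with hv₁def
  have hv₁ne : v₁ ≠ 0 := by
    intro h
    apply hij₀
    have := congrFun h i₀
    rw [hv₁def, Matrix.mulVec_single] at this
    simpa using this
  have hv₁K : (m - 1) *ᵥ v₁ = 0 := by
    rw [hv₁def, Matrix.mulVec_mulVec, hfac1, Matrix.zero_mulVec]
  have hmv₁ : m *ᵥ v₁ = v₁ := by
    have := hv₁K
    rwa [Matrix.sub_mulVec, Matrix.one_mulVec, sub_eq_zero] at this
  have hTv₁ : T *ᵥ v₁ = (3:ℚ) • v₁ := by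
    rw [hT, Matrix.add_mulVec, Matrix.add_mulVec, Matrix.one_mulVec,
      ← Matrix.mulVec_mulVec, hmv₁, hmv₁]
    funext i
    simp only [Pi.add_apply, Pi.smul_apply, smul_eq_mul]
    ring
  -- w : vector in kernel of T
  obtain ⟨i₁, j₁, hij₁⟩ : ∃ i j, (m - 1) i j ≠ 0 := by
    by_contra hc; push_neg at hc
    exact hm1' (by ext i j; simpa using hc i j)
  set w : V3 := (m - 1) *ᵥ Pi.single j₁ 1 with hwdef
  have hwne : w ≠ 0 := by
    intro h
    apply hij₁
    have := congrFun h i₁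
    rw [hwdef, Matrix.mulVec_single] at this
    simpa using this
  have hTw : T *ᵥ w = 0 := by
    rw [hwdef, Matrix.mulVec_mulVec, hfac2, Matrix.zero_mulVec]
  set mw : V3 := m *ᵥ w with hmwdef
  have hTmw : T *ᵥ mw = 0 := by
    rw [hmwdef, Matrix.mulVec_mulVec, hTm, ← Matrix.mulVec_mulVec, hTw,
      Matrix.mulVec_zero]
  have hm2w : m *ᵥ mw = -w - mw := by
    have := hTw
    rw [hT, Matrix.add_mulVec, Matrix.add_mulVec, Matrix.one_mulVec,
      ← Matrix.mulVec_mulVec] at this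
    rw [← hmwdef] at this
    have h2 : m *ᵥ mw + mw + w = 0 := this
    funext i
    have := congrFun h2 i
    simp only [Pi.add_apply, Pi.zero_apply] at this
    simp only [Pi.sub_apply, Pi.neg_apply]
    linarith
  -- key independence computation
  have core2 : ∀ a b : ℚ, a • w + b • mw = 0 → a = 0 ∧ b = 0 := by
    intro a b h
    have h2 : (-b) • w + (a - b) • mw = 0 := by
      have hm := congrArg (fun v => m *ᵥ v) h
      simp only [Matrix.mulVec_add, Matrix.mulVec_smul, Matrix.mulVec_zero] at hm
      rw [← hmwdef, hm2w] at hm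
      funext i
      have h1i := congrFun h i
      have h2i := congrFun hm i
      simp only [Pi.add_apply, Pi.smul_apply, Pi.zero_apply, Pi.sub_apply, Pi.neg_apply,
        smul_eq_mul] at h1i h2i ⊢
      linarith
    have hw0 : (a^2 - a*b + b^2) • w = 0 := by
      funext i
      have h1i := congrFun h i
      have h2i := congrFun h2 i
      simp only [Pi.add_apply, Pi.smul_apply, Pi.zero_apply, smul_eq_mul] at h1i h2i ⊢
      linear_combination (a - b) * h1i - b * h2i
    rcases smul_eq_zero.mp hw0 with hq | hq
    · exact quad_zero hq
    · exact absurd hq hwne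
  -- submodules
  set K : Submodule ℚ V3 := LinearMap.ker (Matrix.mulVecLin (m - 1)) with hK
  set W : Submodule ℚ V3 := LinearMap.ker (Matrix.mulVecLin T) with hW
  have hmemK : ∀ v : V3, v ∈ K ↔ (m - 1) *ᵥ v = 0 := by
    intro v; rw [hK, LinearMap.mem_ker, Matrix.mulVecLin_apply]
  have hmemW : ∀ v : V3, v ∈ W ↔ T *ᵥ v = 0 := by
    intro v; rw [hW, LinearMap.mem_ker, Matrix.mulVecLin_apply]
  have hv₁K' : v₁ ∈ K := (hmemK v₁).mpr hv₁K
  have hwW : w ∈ W := (hmemW w).mpr hTw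
  have hmwW : mw ∈ W := (hmemW mw).mpr hTmw
  have hdisj : K ⊓ W = ⊥ := by
    rw [eq_bot_iff]
    rintro v ⟨hvK, hvW⟩
    have h1 : m *ᵥ v = v := by
      have := (hmemK v).mp hvK
      rwa [Matrix.sub_mulVec, Matrix.one_mulVec, sub_eq_zero] at this
    have h2 : T *ᵥ v = 0 := (hmemW v).mp hvW
    rw [hT, Matrix.add_mulVec, Matrix.add_mulVec, Matrix.one_mulVec,
      ← Matrix.mulVec_mulVec, h1] at h2
    have h3 : v = 0 := by
      funext i
      have h2i := congrFun h2 i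
      have h1i := congrFun h1 i
      simp only [Pi.add_apply, Pi.zero_apply] at h2i
      simp only [Pi.zero_apply]
      linarith
    simp [h3]
  -- linear independence of w, mw
  have indep2 : LinearIndependent ℚ ![w, mw] := by
    rw [Fintype.linearIndependent_iff]
    intro g hg
    have hsum : g 0 • w + g 1 • mw = 0 := by
      rw [← hg]; rw [Fin.sum_univ_two]; rfl
    obtain ⟨h0, h1⟩ := core2 _ _ hsum
    intro i; fin_cases i <;> assumption
  have hfr : Module.finrank ℚ V3 = 3 := by
    rw [Module.finrank_fin_fun]
  -- span of w, mw inside W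
  have hR2W : Submodule.span ℚ (Set.range ![w, mw]) ≤ W := by
    rw [Submodule.span_le]
    rintro x ⟨i, rfl⟩
    fin_cases i
    · exact hwW
    · exact hmwW
  have hR2rank : Module.finrank ℚ (Submodule.span ℚ (Set.range ![w, mw])) = 2 := by
    rw [finrank_span_eq_card indep2]
    rfl
  have hWle : Module.finrank ℚ W ≤ 3 := by
    have := W.finrank_le
    rwa [hfr] at this
  have hWne3 : Module.finrank ℚ W ≠ 3 := by
    intro h3
    have : W = ⊤ := Submodule.eq_top_of_finrank_eq (by rw [h3, hfr])
    have hv₁W : v₁ ∈ W := this ▸ Submodule.mem_top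
    have := (hmemW v₁).mp hv₁W
    rw [hTv₁] at this
    rcases smul_eq_zero.mp this with h | h
    · norm_num at h
    · exact hv₁ne h
  have hWge : 2 ≤ Module.finrank ℚ W := by
    have := Submodule.finrank_mono hR2W
    rwa [hR2rank] at this
  have hW2 : Module.finrank ℚ W = 2 := by omega
  have hK1 : Module.finrank ℚ K = 1 := by
    have hle : Module.finrank ℚ K + 2 ≤ 3 := by
      have := Submodule.finrank_sup_add_finrank_inf_eq K W
      rw [hdisj, finrank_bot, add_zero, hW2] at this
      have h2 := Submodule.finrank_le (K ⊔ W)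
      rw [hfr] at h2
      omega
    have hge : 1 ≤ Module.finrank ℚ K := by
      have hsp : Submodule.span ℚ {v₁} ≤ K := by
        rw [Submodule.span_le, Set.singleton_subset_iff]; exact hv₁K'
      have := Submodule.finrank_mono hsp
      rw [finrank_span_singleton hv₁ne] at this
      omega
    omega
  have hKspan : K = Submodule.span ℚ {v₁} := by
    refine (Submodule.eq_of_le_of_finrank_le ?_ ?_).symm
    · rw [Submodule.span_le, Set.singleton_subset_iff]; exact hv₁K'
    · rw [hK1, finrank_span_singleton hv₁ne]
  have hWspan : W = Submodule.span ℚ (Set.range ![w, mw]) := by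
    refine (Submodule.eq_of_le_of_finrank_le hR2W ?_).symm
    rw [hW2, hR2rank]
  -- basis
  have indep3 : LinearIndependent ℚ ![v₁, w, mw] := by
    rw [Fintype.linearIndependent_iff]
    intro g hg
    have hsum : g 0 • v₁ + (g 1 • w + g 2 • mw) = 0 := by
      rw [← hg, Fin.sum_univ_three]
      simp [add_assoc]
    have hmem : g 0 • v₁ ∈ K ⊓ W := by
      constructor
      · exact K.smul_mem _ hv₁K'
      · have : g 0 • v₁ = -(g 1 • w + g 2 • mw) := by
          rw [eq_neg_iff_add_eq_zero]; exact hsum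
        rw [this]
        exact W.neg_mem (W.add_mem (W.smul_mem _ hwW) (W.smul_mem _ hmwW))
    rw [hdisj, Submodule.mem_bot] at hmem
    have hg0 : g 0 = 0 := by
      rcases smul_eq_zero.mp hmem with h | h
      · exact h
      · exact absurd h hv₁ne
    rw [hmem, zero_add] at hsum
    obtain ⟨hg1, hg2⟩ := core2 _ _ hsum
    intro i; fin_cases i <;> assumption
  have hcard : Fintype.card (Fin 3) = Module.finrank ℚ V3 := by rw [hfr]; rfl
  set bas : Basis (Fin 3) ℚ V3 := basisOfLinearIndependentOfCardEqFinrank indep3 hcard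
    with hbasdef
  have hbas : ⇑bas = ![v₁, w, mw] :=
    coe_basisOfLinearIndependentOfCardEqFinrank indep3 hcard
  have hbas0 : bas 0 = v₁ := by rw [hbas]; rfl
  have hbas1 : bas 1 = w := by rw [hbas]; rfl
  have hbas2 : bas 2 = mw := by rw [hbas]; rfl
  -- constants for the bound
  set x : Fin 3 → Fin 3 → ℚ := fun j k => bas.repr (Pi.single j 1) k with hxdef
  set t : Fin 3 → Fin 3 → ℚ := fun j i =>
      |x j 0| * |v₁ i| + |x j 1| * (2 * |w i| + 2 * |mw i|) +
        |x j 2| * (2 * |w i| + 4 * |mw i|) with htdef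
  set cQ : ℚ := ∑ j : Fin 3, ∑ i : Fin 3, t j i with hcQ
  refine ⟨⌈cQ⌉, ?_⟩
  intro A B hAB hBA hAm i j
  set Aq : M3 := A.map ⇑(Int.castRingHom ℚ) with hAqdef
  set Bq : M3 := B.map ⇑(Int.castRingHom ℚ) with hBqdef
  replace hAm : Aq * m = m * Aq := hAm
  have hABq : Aq * Bq = 1 := by
    rw [hAqdef, hBqdef, ← Matrix.map_mul, hAB]
    exact Matrix.map_one _ (by simp) (by simp)
  have hBAq : Bq * Aq = 1 := by
    rw [hAqdef, hBqdef, ← Matrix.map_mul, hBA]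
    exact Matrix.map_one _ (by simp) (by simp)
  have hBm : Bq * m = m * Bq := by
    calc Bq * m = Bq * m * (Aq * Bq) := by rw [hABq, mul_one]
      _ = Bq * (m * Aq) * Bq := by noncomm_ring
      _ = Bq * (Aq * m) * Bq := by rw [hAm]
      _ = (Bq * Aq) * (m * Bq) := by noncomm_ring
      _ = m * Bq := by rw [hBAq, one_mul]
  have hAm1 : Aq * (m - 1) = (m - 1) * Aq := by
    rw [mul_sub, sub_mul, hAm, mul_one, one_mul]
  have hBm1 : Bq * (m - 1) = (m - 1) * Bq := by
    rw [mul_sub, sub_mul, hBm, mul_one, one_mul]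
  have hATq : Aq * T = T * Aq := by
    have hmm : Aq * (m * m) = (m * m) * Aq := by
      rw [← mul_assoc, hAm, mul_assoc, hAm, mul_assoc]
    rw [hT, mul_add, add_mul, mul_add, add_mul, mul_one, one_mul, hmm, hAm]
  -- action on K
  have hAKmem : Aq *ᵥ v₁ ∈ K := by
    rw [hmemK, Matrix.mulVec_mulVec, ← hAm1, ← Matrix.mulVec_mulVec, hv₁K,
      Matrix.mulVec_zero]
  have hBKmem : Bq *ᵥ v₁ ∈ K := by
    rw [hmemK, Matrix.mulVec_mulVec, ← hBm1, ← Matrix.mulVec_mulVec, hv₁K,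
      Matrix.mulVec_zero]
  rw [hKspan] at hAKmem hBKmem
  obtain ⟨lam, hlam⟩ := Submodule.mem_span_singleton.mp hAKmem
  obtain ⟨lam', hlam'⟩ := Submodule.mem_span_singleton.mp hBKmem
  have hlamprod : lam * lam' = 1 := by
    have h1 : Aq *ᵥ (Bq *ᵥ v₁) = v₁ := by
      rw [Matrix.mulVec_mulVec, hABq, Matrix.one_mulVec]
    rw [← hlam', Matrix.mulVec_smul, ← hlam] at h1
    have h2 : (lam * lam' - 1) • v₁ = 0 := by
      rw [sub_smul, one_smul, mul_comm, mul_smul, h1, sub_self]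
    rcases smul_eq_zero.mp h2 with h | h
    · linarith
    · exact absurd h hv₁ne
  have hlampm : lam = 1 ∨ lam = -1 := by
    obtain ⟨n, hn⟩ := int_eigen A hv₁ne hlam.symm
    obtain ⟨n', hn'⟩ := int_eigen B hv₁ne hlam'.symm
    have : (n : ℚ) * (n' : ℚ) = 1 := by rw [hn, hn']; exact hlamprod
    have hnn : n * n' = 1 := by exact_mod_cast this
    rcases Int.isUnit_iff.mp (IsUnit.of_mul_eq_one _ hnn) with h | h
    · left; rw [← hn, h]; norm_num
    · right; rw [← hn, h]; norm_num
  -- action on W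
  have hAWmem : Aq *ᵥ w ∈ W := by
    rw [hmemW, Matrix.mulVec_mulVec, ← hATq, ← Matrix.mulVec_mulVec, hTw,
      Matrix.mulVec_zero]
  rw [hWspan] at hAWmem
  obtain ⟨cf, hcf⟩ := (mem_span_range_iff_exists_fun ℚ).mp hAWmem
  set p : ℚ := cf 0 with hpdef
  set q : ℚ := cf 1 with hqdef
  have hAw : Aq *ᵥ w = p • w + q • mw := by
    rw [← hcf, Fin.sum_univ_two]
    rfl
  have hAmw : Aq *ᵥ mw = (-q) • w + (p - q) • mw := by
    have h1 : Aq *ᵥ mw = m *ᵥ (p • w + q • mw) := by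
      rw [hmwdef, Matrix.mulVec_mulVec, hAm, ← Matrix.mulVec_mulVec, hAw]
    rw [h1, Matrix.mulVec_add, Matrix.mulVec_smul, Matrix.mulVec_smul, ← hmwdef, hm2w]
    funext i'
    simp only [Pi.add_apply, Pi.smul_apply, Pi.sub_apply, Pi.neg_apply, smul_eq_mul]
    ring
  -- determinant computation via basis
  have hlam2 : Aq *ᵥ v₁ = lam • v₁ := hlam.symm
  have hr0 : bas.repr v₁ = Finsupp.single 0 1 := by rw [← hbas0]; exact bas.repr_self 0
  have hr1 : bas.repr w = Finsupp.single 1 1 := by rw [← hbas1]; exact bas.repr_self 1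
  have hr2 : bas.repr mw = Finsupp.single 2 1 := by rw [← hbas2]; exact bas.repr_self 2
  have hDmat : LinearMap.toMatrix bas bas (Matrix.toLin' Aq) =
      Matrix.of ![![lam, 0, 0], ![0, p, -q], ![0, q, p - q]] := by
    apply Matrix.ext
    intro i' j'
    rw [LinearMap.toMatrix_apply, Matrix.toLin'_apply]
    fin_cases j' <;> fin_cases i' <;>
      simp [hbas0, hbas1, hbas2, hbas, hlam2, hAw, hAmw, _root_.map_add, _root_.map_smul,
        hr0, hr1, hr2, Finsupp.single_apply, Matrix.vecHead, Matrix.vecTail, Matrix.of_apply,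
        Matrix.cons_val_zero, Matrix.cons_val_one, Matrix.head_cons, Function.comp]
  have hdetAq : Aq.det = lam * (p * (p - q) + q * q) := by
    have h1 : Aq.det = LinearMap.det (Matrix.toLin' Aq) := (LinearMap.det_toLin' Aq).symm
    rw [h1, ← LinearMap.det_toMatrix bas, hDmat, Matrix.det_fin_three]
    simp only [Matrix.of_apply, Matrix.cons_val', Matrix.cons_val_zero, Matrix.cons_val_one,
      Matrix.head_cons, Matrix.empty_val', Matrix.cons_val_fin_one, Matrix.head_fin_const,
      Matrix.cons_val_two, Matrix.vecHead, Matrix.vecTail, Function.comp,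
      Matrix.cons_val_succ]
    ring
  have hdetcast : Aq.det = ((A.det : ℤ) : ℚ) := by
    have h := RingHom.map_det (Int.castRingHom ℚ) A
    rw [RingHom.mapMatrix_apply] at h
    rw [hAqdef, ← h]
    simp
  have hdetA : A.det = 1 ∨ A.det = -1 := by
    have hd := congrArg Matrix.det hAB
    rw [Matrix.det_mul, Matrix.det_one] at hd
    exact Int.isUnit_iff.mp (IsUnit.of_mul_eq_one _ hd)
  have hN : p ^ 2 - p * q + q ^ 2 = 1 := by
    have hval : lam * (p * (p - q) + q * q) = ((A.det : ℤ) : ℚ) := by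
      rw [← hdetAq, hdetcast]
    rcases hlampm with h | h <;> rcases hdetA with h' | h' <;>
      rw [h, h'] at hval <;> push_cast at hval <;>
      nlinarith [hval, sq_nonneg (2*p - q), sq_nonneg q, sq_nonneg (p - q), sq_nonneg p]
  have h3 : -(2:ℚ) ≤ 2*p - q := by nlinarith [hN, sq_nonneg (2*p - q + 2), sq_nonneg q]
  have h4 : 2*p - q ≤ (2:ℚ) := by nlinarith [hN, sq_nonneg (2*p - q - 2), sq_nonneg q]
  have h5 : -(2:ℚ) ≤ q := by nlinarith [hN, sq_nonneg (q + 2), sq_nonneg (2*p - q)]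
  have h6 : q ≤ (2:ℚ) := by nlinarith [hN, sq_nonneg (q - 2), sq_nonneg (2*p - q)]
  have hpb : |p| ≤ 2 := abs_le.mpr ⟨by linarith, by linarith⟩
  have hqb : |q| ≤ 2 := abs_le.mpr ⟨by linarith, by linarith⟩
  have hpqb : |p - q| ≤ 4 := abs_le.mpr ⟨by linarith, by linarith⟩
  have hlam1 : |lam| = 1 := by rcases hlampm with h | h <;> rw [h] <;> norm_num
  -- entry formula
  have hrepr := bas.sum_repr (Pi.single j (1:ℚ))
  have hmv : Aq *ᵥ Pi.single j 1 = ∑ k : Fin 3, (bas.repr (Pi.single j 1)) k • (Aq *ᵥ bas k) := by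
    conv_lhs => rw [← hrepr]
    rw [← Matrix.mulVecLin_apply, map_sum]
    refine Finset.sum_congr rfl fun k _ => ?_
    rw [_root_.map_smul, Matrix.mulVecLin_apply]
  have hAij : ((A i j : ℤ) : ℚ) = (bas.repr (Pi.single j 1)) 0 * (lam * v₁ i)
      + (bas.repr (Pi.single j 1)) 1 * (p * w i + q * mw i)
      + (bas.repr (Pi.single j 1)) 2 * (-q * w i + (p - q) * mw i) := by
    have hL : (Aq *ᵥ Pi.single j 1) i = ((A i j : ℤ) : ℚ) := by
      rw [Matrix.mulVec_single]
      simp [hAqdef, Matrix.map_apply]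
    rw [← hL, hmv, Fin.sum_univ_three, hbas0, hbas1, hbas2, ← hlam, hAw, hAmw]
    simp only [Pi.add_apply, Pi.smul_apply, smul_eq_mul, Pi.neg_apply, Pi.sub_apply]
    try ring
  -- bound
  have habs : |((A i j : ℤ) : ℚ)| ≤ t j i := by
    rw [hAij]
    have e0 : |(bas.repr (Pi.single j 1)) 0 * (lam * v₁ i)|
        ≤ |(bas.repr (Pi.single j 1)) 0| * |v₁ i| := by
      rw [abs_mul, abs_mul, hlam1, one_mul]
    have e1 : |(bas.repr (Pi.single j 1)) 1 * (p * w i + q * mw i)|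
        ≤ |(bas.repr (Pi.single j 1)) 1| * (2 * |w i| + 2 * |mw i|) := by
      rw [abs_mul]
      refine mul_le_mul_of_nonneg_left ?_ (abs_nonneg _)
      calc |p * w i + q * mw i| ≤ |p * w i| + |q * mw i| := abs_add_le _ _
        _ = |p| * |w i| + |q| * |mw i| := by rw [abs_mul, abs_mul]
        _ ≤ 2 * |w i| + 2 * |mw i| := add_le_add
            (mul_le_mul_of_nonneg_right hpb (abs_nonneg _))
            (mul_le_mul_of_nonneg_right hqb (abs_nonneg _))
    have e2 : |(bas.repr (Pi.single j 1)) 2 * (-q * w i + (p - q) * mw i)|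
        ≤ |(bas.repr (Pi.single j 1)) 2| * (2 * |w i| + 4 * |mw i|) := by
      rw [abs_mul]
      refine mul_le_mul_of_nonneg_left ?_ (abs_nonneg _)
      calc |(-q) * w i + (p - q) * mw i| ≤ |(-q) * w i| + |(p - q) * mw i| := abs_add_le _ _
        _ = |q| * |w i| + |p - q| * |mw i| := by rw [abs_mul, abs_mul, abs_neg]
        _ ≤ 2 * |w i| + 4 * |mw i| := add_le_add
            (mul_le_mul_of_nonneg_right hqb (abs_nonneg _))
            (mul_le_mul_of_nonneg_right hpqb (abs_nonneg _))
    have echain := le_trans (abs_add_le _ _)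
      (add_le_add (le_trans (abs_add_le _ _) (add_le_add e0 e1)) e2)
    simp only [htdef, hxdef]
    exact echain
  have ht_nonneg : ∀ j' i', 0 ≤ t j' i' := by
    intro j' i'
    simp only [htdef, hxdef]
    positivity
  have hstep1 : t j i ≤ ∑ i' : Fin 3, t j i' :=
    Finset.single_le_sum (fun i' _ => ht_nonneg j i') (Finset.mem_univ i)
  have hstep2 : (∑ i' : Fin 3, t j i') ≤ cQ := by
    rw [hcQ]
    exact Finset.single_le_sum
      (fun j' _ => Finset.sum_nonneg fun i' _ => ht_nonneg j' i') (Finset.mem_univ j)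
  have hfin : ((|A i j| : ℤ) : ℚ) ≤ ((⌈cQ⌉ : ℤ) : ℚ) := by
    rw [Int.cast_abs]
    exact le_trans habs (le_trans hstep1 (le_trans hstep2 (Int.le_ceil cQ)))
  exact_mod_cast hfin
end Stmt4

end

/-- The centraliser in `GL₃(ℤ)` of any element of order 3 is finite. -/
theorem stmt_4 (M : GL (Fin 3) ℤ) (hM : orderOf M = 3) :
    Finite (Subgroup.centralizer ({M} : Set (GL (Fin 3) ℤ))) := by
  classical
  set m : Stmt4.M3 := ((M : Matrix (Fin 3) (Fin 3) ℤ)).map ⇑(Int.castRingHom ℚ) with hm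
  have hM3 : M ^ 3 = 1 := by
    have h := pow_orderOf_eq_one M
    rwa [hM] at h
  have hMcube : (M : Matrix (Fin 3) (Fin 3) ℤ) ^ 3 = 1 := by
    have h := congrArg (Units.val) hM3
    simpa using h
  have hm3 : m ^ 3 = 1 := by
    have h2 : (M : Matrix (Fin 3) (Fin 3) ℤ) * (M : Matrix (Fin 3) (Fin 3) ℤ) *
        (M : Matrix (Fin 3) (Fin 3) ℤ) = 1 := by
      rw [show (M : Matrix (Fin 3) (Fin 3) ℤ) * (M : Matrix (Fin 3) (Fin 3) ℤ) *
        (M : Matrix (Fin 3) (Fin 3) ℤ) = (M : Matrix (Fin 3) (Fin 3) ℤ) ^ 3 from by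
          noncomm_ring]
      exact hMcube
    have hp3 : m ^ 3 = m * m * m := by noncomm_ring
    rw [hp3, hm, ← Matrix.map_mul, ← Matrix.map_mul, h2]
    exact Matrix.map_one _ (by simp) (by simp)
  have hMne : M ≠ 1 := by
    intro h
    rw [h, orderOf_one] at hM
    norm_num at hM
  have hm1 : m ≠ 1 := by
    intro h
    apply hMne
    have hval : (M : Matrix (Fin 3) (Fin 3) ℤ) = 1 := by
      ext i j
      have hij := congrArg (fun X : Stmt4.M3 => X i j) h
      simp only [hm, Matrix.map_apply] at hij
      by_cases hij' : i = j
      · subst hij'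
        simp only [Matrix.one_apply_eq, map_intCast, eq_intCast] at hij ⊢
        exact_mod_cast hij
      · simp only [Matrix.one_apply_ne hij', map_intCast, eq_intCast] at hij ⊢
        exact_mod_cast hij
    exact Units.ext hval
  obtain ⟨c, hc⟩ := Stmt4.key m hm3 hm1
  have hfinIcc : Finite (Set.Icc (-c) c) := (Set.finite_Icc (-c) c).to_subtype
  have hmem : ∀ P : Subgroup.centralizer ({M} : Set (GL (Fin 3) ℤ)),
      ∀ i j, ((P : GL (Fin 3) ℤ) : Matrix (Fin 3) (Fin 3) ℤ) i j ∈ Set.Icc (-c) c := by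
    intro P i j
    set A : Matrix (Fin 3) (Fin 3) ℤ := ((P : GL (Fin 3) ℤ) : Matrix (Fin 3) (Fin 3) ℤ)
      with hA
    set B : Matrix (Fin 3) (Fin 3) ℤ :=
      ((((P : GL (Fin 3) ℤ))⁻¹ : GL (Fin 3) ℤ) : Matrix (Fin 3) (Fin 3) ℤ) with hB
    have hAB : A * B = 1 := by
      rw [hA, hB, ← Units.val_mul, mul_inv_cancel]
      rfl
    have hBA : B * A = 1 := by
      rw [hA, hB, ← Units.val_mul, inv_mul_cancel]
      rfl
    have hcomm : (M : GL (Fin 3) ℤ) * (P : GL (Fin 3) ℤ) = (P : GL (Fin 3) ℤ) * M :=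
      Subgroup.mem_centralizer_iff.mp P.2 M (Set.mem_singleton M)
    have hcommM : A * (M : Matrix (Fin 3) (Fin 3) ℤ) = (M : Matrix (Fin 3) (Fin 3) ℤ) * A := by
      have := congrArg (Units.val) hcomm
      simpa [Units.val_mul] using this.symm
    have hcommQ : (A.map ⇑(Int.castRingHom ℚ)) * m = m * (A.map ⇑(Int.castRingHom ℚ)) := by
      rw [hm, ← Matrix.map_mul, ← Matrix.map_mul, hcommM]
    have := hc A B hAB hBA hcommQ i j
    exact abs_le.mp this |> fun ⟨h1, h2⟩ => ⟨h1, h2⟩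
  let f : Subgroup.centralizer ({M} : Set (GL (Fin 3) ℤ)) →
      (Fin 3 → Fin 3 → Set.Icc (-c) c) := fun P i j =>
    ⟨((P : GL (Fin 3) ℤ) : Matrix (Fin 3) (Fin 3) ℤ) i j, hmem P i j⟩
  have hinj : Function.Injective f := by
    intro P Q hPQ
    have hmat : ((P : GL (Fin 3) ℤ) : Matrix (Fin 3) (Fin 3) ℤ)
        = ((Q : GL (Fin 3) ℤ) : Matrix (Fin 3) (Fin 3) ℤ) := by
      ext i j
      have := congrFun (congrFun hPQ i) j
      exact Subtype.ext_iff.mp this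
    exact Subtype.ext (Units.ext hmat)
  exact Finite.of_injective f hinj
end

section
/- Every element M of order 3 in GL₃(ℤ) is conjugate in GL₃(ℤ) to a block upper-triangular matrix of the form [[1, *, *],[0, a, b],[0, c, d]] where the 2×2 block [[a,b],[c,d]] is an element of order 3 in GL₂(ℤ). -/
open Matrix


-- Step 1: existence of fixed vector with a functional hitting 1
lemma step1 (A : Matrix (Fin 3) (Fin 3) ℤ) (hA3 : A * A * A = 1) :
    ∃ w : Fin 3 → ℤ, A *ᵥ w = w ∧ ∃ f : (Fin 3 → ℤ) →ₗ[ℤ] ℤ, f w = 1 := by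
  -- det A = 1
  have hdet : A.det = 1 := by
    have h := congrArg Matrix.det hA3
    rw [Matrix.det_mul, Matrix.det_mul, Matrix.det_one] at h
    nlinarith [sq_nonneg (A.det - 1), sq_nonneg (A.det + 1), sq_nonneg A.det]
  -- det (A - 1) = 0
  have hd0 : (A - 1).det = 0 := by
    by_contra hd
    have hfac : (A - 1) * (A * A + A + 1) = 0 := by
      have : (A - 1) * (A * A + A + 1) = A * A * A - 1 := by noncomm_ring
      rw [this, hA3, sub_self]
    have hB : A * A + A + 1 = 0 := by
      have h2 : (A - 1).det • (A * A + A + 1) = 0 := by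
        calc (A - 1).det • (A * A + A + 1)
            = ((A - 1).det • (1 : Matrix (Fin 3) (Fin 3) ℤ)) * (A * A + A + 1) := by
              rw [Matrix.smul_mul, Matrix.one_mul]
          _ = (A - 1).adjugate * ((A - 1) * (A * A + A + 1)) := by
              rw [← Matrix.adjugate_mul, Matrix.mul_assoc]
          _ = 0 := by rw [hfac, Matrix.mul_zero]
      ext i j
      have := congrFun (congrFun h2 i) j
      simp only [Matrix.smul_apply, smul_eq_mul, Matrix.zero_apply] at this ⊢
      exact (mul_eq_zero.mp this).resolve_left hd
    have hsq : (A - 1) * (A - 1) = -((3 : ℤ) • A) := by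
      have h1 : (A - 1) * (A - 1) = (A * A + A + 1) - (A + A + A) := by noncomm_ring
      have h2 : A + A + A = (3 : ℤ) • A := by ext i j; simp [Matrix.smul_apply]; ring
      rw [h1, hB, h2, zero_sub]
    have hdd := congrArg Matrix.det hsq
    rw [Matrix.det_mul, Matrix.det_neg, Matrix.det_smul, hdet] at hdd
    norm_num [Fintype.card_fin] at hdd
    nlinarith [sq_nonneg (A - 1).det]
  obtain ⟨v, hv0, hvker⟩ := (Matrix.exists_mulVec_eq_zero_iff).mpr hd0
  have hvfix : A *ᵥ v = v := by
    have := hvker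
    rw [Matrix.sub_mulVec, Matrix.one_mulVec, sub_eq_zero] at this
    exact this
  -- gcd
  set g : ℕ := (v 0).gcd ((v 1).gcd (v 2)) with hg
  have hgd : ∀ i, (g : ℤ) ∣ v i := by
    intro i
    fin_cases i
    · exact Int.gcd_dvd_left _ _
    · exact dvd_trans (Int.gcd_dvd_right _ _) (Int.gcd_dvd_left _ _)
    · exact dvd_trans (Int.gcd_dvd_right _ _) (Int.gcd_dvd_right _ _)
  have hgne : (g : ℤ) ≠ 0 := by
    intro h
    apply hv0
    have hg0 : g = 0 := by exact_mod_cast h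
    rw [hg] at hg0
    have h0 := Int.gcd_eq_zero_iff.mp hg0
    have h02 : (v 1).gcd (v 2) = 0 := by exact_mod_cast h0.2
    have h12 := Int.gcd_eq_zero_iff.mp h02
    funext i; fin_cases i
    · exact h0.1
    · exact h12.1
    · exact h12.2
  set w : Fin 3 → ℤ := fun i => v i / (g : ℤ) with hw
  have hvw : ∀ i, v i = (g : ℤ) * w i := by
    intro i; rw [hw]; exact (Int.mul_ediv_cancel' (hgd i)).symm
  refine ⟨w, ?_, ?_⟩
  · funext i
    have h1 : A *ᵥ v = fun i => (g : ℤ) * (A *ᵥ w) i := by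
      funext j
      simp only [Matrix.mulVec, dotProduct]
      rw [Finset.mul_sum]
      congr 1; funext k; rw [hvw k]; ring
    have h2 := congrFun h1 i
    rw [hvfix] at h2
    rw [hvw i] at h2
    exact (mul_left_cancel₀ hgne h2.symm)
  · -- Bezout functional
    obtain ⟨p, q, hpq⟩ : ∃ p q : ℤ, (g : ℤ) = v 0 * p + ((v 1).gcd (v 2) : ℤ) * q :=
      ⟨Int.gcdA (v 0) _, Int.gcdB (v 0) _, Int.gcd_eq_gcd_ab _ _⟩
    obtain ⟨r, s, hrs⟩ : ∃ r s : ℤ, ((v 1).gcd (v 2) : ℤ) = v 1 * r + v 2 * s :=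
      ⟨Int.gcdA (v 1) _, Int.gcdB (v 1) _, Int.gcd_eq_gcd_ab _ _⟩
    refine ⟨p • (LinearMap.proj 0 : (Fin 3 → ℤ) →ₗ[ℤ] ℤ)
      + (q * r) • (LinearMap.proj 1 : (Fin 3 → ℤ) →ₗ[ℤ] ℤ)
      + (q * s) • (LinearMap.proj 2 : (Fin 3 → ℤ) →ₗ[ℤ] ℤ), ?_⟩
    simp only [LinearMap.add_apply, LinearMap.smul_apply, LinearMap.proj_apply, smul_eq_mul]
    have key : (g : ℤ) * (p * w 0 + q * r * w 1 + q * s * w 2) = (g : ℤ) * 1 := by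
      rw [mul_one]
      calc (g : ℤ) * (p * w 0 + q * r * w 1 + q * s * w 2)
          = v 0 * p + (v 1 * r + v 2 * s) * q := by
            rw [hvw 0, hvw 1, hvw 2]; ring
        _ = (g : ℤ) := by rw [hpq, hrs]
    exact mul_left_cancel₀ hgne key


lemma step2 (w : Fin 3 → ℤ) (f : (Fin 3 → ℤ) →ₗ[ℤ] ℤ) (hfw : f w = 1) :
    ∃ b : Module.Basis (Fin 3) ℤ (Fin 3 → ℤ), b 0 = w := by
  set K := LinearMap.ker f with hK
  have hmem : ∀ x : Fin 3 → ℤ, x - f x • w ∈ K := by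
    intro x
    simp only [hK, LinearMap.mem_ker, map_sub, LinearMap.map_smul, hfw, smul_eq_mul, mul_one,
      sub_self]
  let F : (Fin 3 → ℤ) →ₗ[ℤ] ℤ × K :=
    LinearMap.prod f
      ((LinearMap.id - (LinearMap.toSpanSingleton ℤ _ w).comp f).codRestrict K
        (by intro x; exact hmem x))
  let G : ℤ × K →ₗ[ℤ] (Fin 3 → ℤ) :=
    (LinearMap.toSpanSingleton ℤ _ w).comp (LinearMap.fst ℤ ℤ K)
      + K.subtype.comp (LinearMap.snd ℤ ℤ K)
  have hGval : ∀ (t : ℤ) (k : K), G (t, k) = t • w + ↑k := fun t k => rfl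
  have hFval1 : ∀ x, (F x).1 = f x := fun x => rfl
  have hFval2 : ∀ x, ((F x).2 : Fin 3 → ℤ) = x - f x • w := fun x => rfl
  have hfG : ∀ (t : ℤ) (k : K), f (G (t, k)) = t := by
    intro t k
    have hfk : f ↑k = 0 := k.2
    rw [hGval, map_add, LinearMap.map_smul, hfw, hfk, smul_eq_mul, mul_one, add_zero]
  have hFG : F.comp G = LinearMap.id := by
    apply LinearMap.ext
    rintro ⟨t, k⟩
    show F (G (t, k)) = (t, k)
    apply Prod.ext
    · rw [hFval1, hfG]
    · apply Subtype.ext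
      rw [hFval2, hfG, hGval]
      abel
  have hGF : G.comp F = LinearMap.id := by
    apply LinearMap.ext
    intro x
    show G ((F x).1, (F x).2) = x
    rw [hGval, hFval1, hFval2]
    abel
  let e : (Fin 3 → ℤ) ≃ₗ[ℤ] ℤ × K := LinearEquiv.ofLinear F G hFG hGF
  obtain ⟨n, bK⟩ := Submodule.basisOfPid (Pi.basisFun ℤ (Fin 3)) K
  haveI : Module.Finite ℤ K := Module.Finite.of_basis bK
  haveI : Module.Free ℤ K := Module.Free.of_basis bK
  have hn : n = 2 := by
    have h1 : Module.finrank ℤ (Fin 3 → ℤ) = 3 := by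
      simp [Module.finrank_pi]
    have h2 : Module.finrank ℤ (ℤ × K) = 1 + Module.finrank ℤ K := by
      rw [Module.finrank_prod, Module.finrank_self]
    have h3 : Module.finrank ℤ K = n := by
      rw [Module.finrank_eq_card_basis bK, Fintype.card_fin]
    have h4 := e.finrank_eq
    omega
  subst hn
  let bprod : Module.Basis (Fin 1 ⊕ Fin 2) ℤ (ℤ × K) := (Module.Basis.singleton (Fin 1) ℤ).prod bK
  let b : Module.Basis (Fin 3) ℤ (Fin 3 → ℤ) := (bprod.map e.symm).reindex finSumFinEquiv
  refine ⟨b, ?_⟩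
  have h0 : (finSumFinEquiv (m := 1) (n := 2)).symm (0 : Fin 3) = Sum.inl 0 := by decide
  have hb0 : b 0 = e.symm (bprod (Sum.inl 0)) := by
    rw [Module.Basis.reindex_apply, h0, Module.Basis.map_apply]
  rw [hb0]
  have hbp : bprod (Sum.inl 0) = ((1 : ℤ), (0 : K)) := by
    apply Prod.ext
    · rw [Module.Basis.prod_apply_inl_fst]; simp [Module.Basis.singleton_apply]
    · rw [Module.Basis.prod_apply_inl_snd]
  rw [hbp]
  show G (1, 0) = w
  rw [hGval]
  simp

/-- Every element of order 3 in `GL₃(ℤ)` is conjugate in `GL₃(ℤ)` to a block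
upper-triangular matrix `!![1,x,y; 0,a,b; 0,c,d]` whose lower-right `2 × 2`
block is an element of order 3 in `GL₂(ℤ)`. -/
theorem stmt_9 (M : GL (Fin 3) ℤ) (hM : orderOf M = 3) :
    ∃ (P : GL (Fin 3) ℤ) (x y a b c d : ℤ),
      (↑(P * M * P⁻¹) : Matrix (Fin 3) (Fin 3) ℤ) = !![1, x, y; 0, a, b; 0, c, d] ∧
      ∃ N : GL (Fin 2) ℤ, (↑N : Matrix (Fin 2) (Fin 2) ℤ) = !![a, b; c, d] ∧
        orderOf N = 3 := by
  have hM3 : M ^ 3 = 1 := by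
    have h := pow_orderOf_eq_one M
    rwa [hM] at h
  set A : Matrix (Fin 3) (Fin 3) ℤ := (↑M : Matrix (Fin 3) (Fin 3) ℤ) with hA
  have hA3 : A * A * A = 1 := by
    have h1 : (↑(M ^ 3) : Matrix (Fin 3) (Fin 3) ℤ) = A * A * A := by
      rw [Units.val_pow_eq_pow_val, pow_succ, pow_succ, pow_one]
    rw [hM3, Units.val_one] at h1
    exact h1.symm
  obtain ⟨w, hw, f, hfw⟩ := step1 A hA3
  obtain ⟨b, hb0⟩ := step2 w f hfw
  set S := Pi.basisFun ℤ (Fin 3) with hS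
  set flin := Matrix.toLin S S A with hflin
  set Pm := LinearMap.toMatrix S b LinearMap.id with hPm
  set Qm := LinearMap.toMatrix b S LinearMap.id with hQm
  have hPQ : Pm * Qm = 1 := by
    rw [hPm, hQm, ← LinearMap.toMatrix_comp b S b LinearMap.id LinearMap.id,
      LinearMap.id_comp, LinearMap.toMatrix_id]
  have hQP : Qm * Pm = 1 := by
    rw [hPm, hQm, ← LinearMap.toMatrix_comp S b S LinearMap.id LinearMap.id,
      LinearMap.id_comp, LinearMap.toMatrix_id]
  set C := LinearMap.toMatrix b b flin with hC
  have hCeq : Pm * A * Qm = C := by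
    calc Pm * A * Qm = Pm * (A * Qm) := by rw [Matrix.mul_assoc]
      _ = Pm * (LinearMap.toMatrix S S flin * Qm) := by rw [LinearMap.toMatrix_toLin]
      _ = Pm * LinearMap.toMatrix b S (flin.comp LinearMap.id) := by
          rw [LinearMap.toMatrix_comp b S S]
      _ = LinearMap.toMatrix b b (LinearMap.id.comp (flin.comp LinearMap.id)) := by
          rw [LinearMap.toMatrix_comp b S b]
      _ = C := by rw [LinearMap.id_comp, LinearMap.comp_id]
  have hC3 : C * C * C = 1 := by
    have h1 : C * C * C = LinearMap.toMatrix b b ((flin.comp flin).comp flin) := by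
      rw [LinearMap.toMatrix_comp b b b, LinearMap.toMatrix_comp b b b]
    have h2 : (flin.comp flin).comp flin = Matrix.toLin S S (A * A * A) := by
      rw [Matrix.toLin_mul S S S, Matrix.toLin_mul S S S]
    rw [h1, h2, hA3, Matrix.toLin_one, LinearMap.toMatrix_id]
  have hflinb0 : flin (b 0) = b 0 := by
    rw [hb0, hflin, hS, Matrix.toLin_eq_toLin', Matrix.toLin'_apply, hw]
  have hcol : ∀ i, C i 0 = if (0 : Fin 3) = i then 1 else 0 := by
    intro i
    rw [hC, LinearMap.toMatrix_apply, hflinb0, Module.Basis.repr_self, Finsupp.single_apply]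
  have hC00 : C 0 0 = 1 := by rw [hcol]; simp
  have hC10 : C 1 0 = 0 := by rw [hcol]; simp
  have hC20 : C 2 0 = 0 := by rw [hcol]; simp
  have hCform : C = !![1, C 0 1, C 0 2; 0, C 1 1, C 1 2; 0, C 2 1, C 2 2] := by
    conv_lhs => rw [Matrix.eta_fin_three C]
    rw [hC00, hC10, hC20]
  -- the GL₃ conjugator
  set P : GL (Fin 3) ℤ := ⟨Pm, Qm, hPQ, hQP⟩ with hP
  have hPMP : (↑(P * M * P⁻¹) : Matrix (Fin 3) (Fin 3) ℤ) = C := by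
    have hinv : (↑(P⁻¹) : Matrix (Fin 3) (Fin 3) ℤ) = Qm := rfl
    rw [Units.val_mul, Units.val_mul, hinv]
    exact hCeq
  refine ⟨P, C 0 1, C 0 2, C 1 1, C 1 2, C 2 1, C 2 2, by rw [hPMP]; exact hCform, ?_⟩
  -- equations from C³ = 1
  have h3 : !![1, C 0 1, C 0 2; 0, C 1 1, C 1 2; 0, C 2 1, C 2 2]
      * !![1, C 0 1, C 0 2; 0, C 1 1, C 1 2; 0, C 2 1, C 2 2]
      * !![1, C 0 1, C 0 2; 0, C 1 1, C 1 2; 0, C 2 1, C 2 2] = 1 := by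
    rw [← hCform]; exact hC3
  set x := C 0 1
  set y := C 0 2
  set a := C 1 1
  set bb := C 1 2
  set c := C 2 1
  set d := C 2 2
  clear_value x y a bb c d
  rw [Matrix.mul_fin_three, Matrix.mul_fin_three, Matrix.one_fin_three] at h3
  have e01 := congrFun (congrFun h3 0) 1
  have e02 := congrFun (congrFun h3 0) 2
  have e11 := congrFun (congrFun h3 1) 1
  have e12 := congrFun (congrFun h3 1) 2
  have e21 := congrFun (congrFun h3 2) 1
  have e22 := congrFun (congrFun h3 2) 2
  simp at e01 e02 e11 e12 e21 e22
  have hN3 : !![a, bb; c, d] * !![a, bb; c, d] * !![a, bb; c, d] = 1 := by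
    rw [Matrix.mul_fin_two, Matrix.mul_fin_two, Matrix.one_fin_two]
    ext i j
    fin_cases i <;> fin_cases j <;> simp
    · linear_combination e11
    · linear_combination e12
    · linear_combination e21
    · linear_combination e22
  set Nm : Matrix (Fin 2) (Fin 2) ℤ := !![a, bb; c, d] with hNm
  have hN3' : Nm * (Nm * Nm) = 1 := by rw [← Matrix.mul_assoc]; exact hN3
  have hN3'' : (Nm * Nm) * Nm = 1 := hN3
  set N : GL (Fin 2) ℤ := ⟨Nm, Nm * Nm, hN3', hN3''⟩ with hN
  refine ⟨N, rfl, ?_⟩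
  haveI : Fact (Nat.Prime 3) := ⟨by norm_num⟩
  apply orderOf_eq_prime
  · apply Units.ext
    rw [Units.val_pow_eq_pow_val, Units.val_one, pow_succ, pow_succ, pow_one]
    exact hN3
  · -- N ≠ 1
    intro hN1
    have hNm1 : Nm = 1 := congrArg Units.val hN1
    rw [Matrix.one_fin_two] at hNm1
    have ha : a = 1 := congrFun (congrFun hNm1 0) 0
    have hb : bb = 0 := congrFun (congrFun hNm1 0) 1
    have hc : c = 0 := congrFun (congrFun hNm1 1) 0
    have hd : d = 1 := congrFun (congrFun hNm1 1) 1
    subst ha hb hc hd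
    have hx : x = 0 := by nlinarith [e01, e02]
    have hy : y = 0 := by nlinarith [e01, e02]
    have hC1 : C = 1 := by
      rw [hCform, hx, hy, Matrix.one_fin_three]
    have hPMP1 : P * M * P⁻¹ = 1 := by
      apply Units.ext
      rw [hPMP, hC1, Units.val_one]
    have hM1 : M = 1 := by
      have := congrArg (fun z => P⁻¹ * z * P) hPMP1
      simpa [mul_assoc] using this
    rw [hM1, orderOf_one] at hM
    norm_num at hM
end

section
/- If M ∈ GL₃(ℤ) has order 3, then 1 is an eigenvalue of M, and there exists an eigenvector v = (a₁,a₂,a₃) ∈ ℤ³ for the eigenvalue 1 with gcd(a₁, a₂, a₃) = 1. -/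
open Matrix

/-- If `M ∈ GL₃(ℤ)` has order 3, then `1` is an eigenvalue of `M`, witnessed by
an integer eigenvector with coprime coordinates. -/
theorem stmt_10 (M : GL (Fin 3) ℤ) (hM : orderOf M = 3) :
    ∃ v : Fin 3 → ℤ, v ≠ 0 ∧
      (↑M : Matrix (Fin 3) (Fin 3) ℤ).mulVec v = v ∧
      Int.gcd (v 0) (Int.gcd (v 1) (v 2)) = 1 := by
  set A : Matrix (Fin 3) (Fin 3) ℤ := (↑M : Matrix (Fin 3) (Fin 3) ℤ) with hA
  have hM3 : M ^ 3 = 1 := by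
    have h := pow_orderOf_eq_one M
    rwa [hM] at h
  have hA3 : A ^ 3 = 1 := by
    rw [hA, ← Units.val_pow_eq_pow_val, hM3, Units.val_one]
  have hdet : A.det = 1 := by
    have h1 : A.det ^ 3 = 1 := by rw [← det_pow, hA3, det_one]
    nlinarith [sq_nonneg (A.det - 1), sq_nonneg (A.det + 1)]
  set N : Matrix (Fin 3) (Fin 3) ℤ := 1 + A + A ^ 2 with hNdef
  have hAN : A * N = N := by
    rw [hNdef]
    have : A * (1 + A + A ^ 2) = A + A ^ 2 + A ^ 3 := by noncomm_ring
    rw [this, hA3]; abel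
  have hN : N ≠ 0 := by
    intro hN0
    rw [hNdef] at hN0
    have h2 : A ^ 2 = -1 - A := by
      have h := hN0
      rw [show (1 : Matrix (Fin 3) (Fin 3) ℤ) + A + A ^ 2 = A ^ 2 + (1 + A) by abel,
        add_eq_zero_iff_eq_neg] at h
      rw [h]; abel
    have h3 : (A - 1) ^ 2 = (-3 : ℤ) • A := by
      have : (A - 1) ^ 2 = A ^ 2 - (A + A) + 1 := by noncomm_ring
      rw [this, h2]
      module
    have h4 := congrArg Matrix.det h3
    rw [det_pow, det_smul, hdet] at h4
    simp [Fintype.card_fin] at h4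
    nlinarith [sq_nonneg ((A - 1).det)]
  -- find a nonzero entry
  have : ¬ ∀ i j, N i j = (0 : Matrix (Fin 3) (Fin 3) ℤ) i j := by
    intro h; exact hN (Matrix.ext h)
  push_neg at this
  obtain ⟨i, j, hij⟩ := this
  simp only [Matrix.zero_apply] at hij
  set w : Fin 3 → ℤ := fun k => N k j with hw
  have hAw : A.mulVec w = w := by
    funext k
    have : (A * N) k j = N k j := by rw [hAN]
    simpa [Matrix.mul_apply, Matrix.mulVec, dotProduct, hw] using this
  have hwne : w ≠ 0 := by
    intro h0
    apply hij
    have := congrFun h0 i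
    simpa [hw] using this
  set g : ℕ := Int.gcd (w 0) (Int.gcd (w 1) (w 2)) with hg
  have hgne : g ≠ 0 := by
    intro h0
    rw [hg, Int.gcd_eq_zero_iff] at h0
    obtain ⟨h1, h2⟩ := h0
    rw [Int.natCast_eq_zero, Int.gcd_eq_zero_iff] at h2
    apply hwne
    funext k
    fin_cases k <;> simp [h1, h2.1, h2.2]
  have hd0 : (g : ℤ) ∣ w 0 := Int.gcd_dvd_left _ _
  have hdin : (g : ℤ) ∣ (Int.gcd (w 1) (w 2) : ℤ) := Int.gcd_dvd_right _ _
  have hd1 : (g : ℤ) ∣ w 1 := hdin.trans (Int.gcd_dvd_left _ _)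
  have hd2 : (g : ℤ) ∣ w 2 := hdin.trans (Int.gcd_dvd_right _ _)
  set v : Fin 3 → ℤ := fun k => w k / (g : ℤ) with hv
  have hvw : ∀ k, (g : ℤ) * v k = w k := by
    intro k
    fin_cases k <;> simp only [hv] <;>
      [exact Int.mul_ediv_cancel' hd0; exact Int.mul_ediv_cancel' hd1; exact Int.mul_ediv_cancel' hd2]
  have hwv : w = (g : ℤ) • v := by
    funext k; rw [Pi.smul_apply, smul_eq_mul, hvw]
  have hgz : (g : ℤ) ≠ 0 := Int.natCast_ne_zero.mpr hgne
  refine ⟨v, ?_, ?_, ?_⟩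
  · intro h0
    apply hwne
    rw [hwv, h0, smul_zero]
  · have : A.mulVec ((g : ℤ) • v) = (g : ℤ) • v := by rw [← hwv]; exact hAw
    rw [mulVec_smul] at this
    exact smul_right_injective (Fin 3 → ℤ) hgz this
  · have h12 : Int.gcd (w 1) (w 2) = g * Int.gcd (v 1) (v 2) := by
      rw [← hvw 1, ← hvw 2, Int.gcd_mul_left, Int.natAbs_natCast]
    have h012 : g = g * Int.gcd (v 0) (Int.gcd (v 1) (v 2)) := by
      conv_lhs => rw [hg]
      rw [← hvw 0, h12]
      push_cast
      rw [Int.gcd_mul_left, Int.natAbs_natCast]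
    have := h012
    nth_rewrite 1 [← Nat.mul_one g] at this
    exact (Nat.eq_of_mul_eq_mul_left (Nat.pos_of_ne_zero hgne) this).symm
end

section
/- The 4×4 integer matrix D = [[4,-1,1,1],[-1,4,-1,1],[2,-2,1,0],[1,1,0,1]] lies in SL₄(ℤ) and has four pairwise distinct real positive eigenvalues 3+2√2, 2+√3, 2−√3, and 3−2√2. -/
open Matrix

lemma eig_iff_det (M : Matrix (Fin 4) (Fin 4) ℝ) (μ : ℝ) :
    Module.End.HasEigenvalue (Matrix.toLin' M) μ ↔ (M - μ • 1).det = 0 := by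
  rw [Module.End.HasEigenvalue, Module.End.HasUnifEigenvalue, Submodule.ne_bot_iff,
    ← Matrix.exists_mulVec_eq_zero_iff]
  apply exists_congr; intro v
  rw [Module.End.genEigenspace_one, LinearMap.mem_ker, and_comm]
  apply and_congr_right'
  simp [Matrix.toLin'_apply, Matrix.sub_mulVec, Matrix.smul_mulVec, Matrix.one_mulVec,
    sub_eq_zero]

lemma det_fact (μ : ℝ) :
    ((!![4, -1, 1, 1; -1, 4, -1, 1; 2, -2, 1, 0; 1, 1, 0, 1] : Matrix (Fin 4) (Fin 4) ℝ)
      - μ • 1).det = (μ^2 - 6*μ + 1) * (μ^2 - 4*μ + 1) := by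
  have h : (!![4, -1, 1, 1; -1, 4, -1, 1; 2, -2, 1, 0; 1, 1, 0, 1] : Matrix (Fin 4) (Fin 4) ℝ)
        - μ • 1
      = !![4-μ, -1, 1, 1; -1, 4-μ, -1, 1; 2, -2, 1-μ, 0; 1, 1, 0, 1-μ] := by
    ext i j
    fin_cases i <;> fin_cases j <;> simp [Matrix.one_apply]
  rw [h]
  simp [Matrix.det_succ_row_zero, Fin.sum_univ_succ, Fin.succAbove]
  ring

/-- The matrix `D = !![4,-1,1,1; -1,4,-1,1; 2,-2,1,0; 1,1,0,1]` lies in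
`SL₄(ℤ)` (its determinant is 1) and, viewed over `ℝ`, it has four pairwise
distinct positive real eigenvalues, namely `3+2√2`, `2+√3`, `2-√3`, `3-2√2`. -/
theorem stmt_13 (D : Matrix (Fin 4) (Fin 4) ℝ)
    (hD : D = !![4, -1, 1, 1; -1, 4, -1, 1; 2, -2, 1, 0; 1, 1, 0, 1]) :
    D.det = 1 ∧
    List.Pairwise (· ≠ ·)
      [3 + 2 * Real.sqrt 2, 2 + Real.sqrt 3, 2 - Real.sqrt 3, 3 - 2 * Real.sqrt 2] ∧
    (∀ μ ∈ [3 + 2 * Real.sqrt 2, 2 + Real.sqrt 3, 2 - Real.sqrt 3,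
        3 - 2 * Real.sqrt 2], 0 < μ ∧ Module.End.HasEigenvalue (Matrix.toLin' D) μ) ∧
    ∀ μ : ℝ, Module.End.HasEigenvalue (Matrix.toLin' D) μ →
      μ ∈ [3 + 2 * Real.sqrt 2, 2 + Real.sqrt 3, 2 - Real.sqrt 3,
        3 - 2 * Real.sqrt 2] := by
  subst hD
  have s2 : Real.sqrt 2 ^ 2 = 2 := Real.sq_sqrt (by norm_num)
  have s3 : Real.sqrt 3 ^ 2 = 3 := Real.sq_sqrt (by norm_num)
  have h2l : (1.4 : ℝ) < Real.sqrt 2 := by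
    rw [show (1.4 : ℝ) = Real.sqrt (1.4 ^ 2) by
      rw [Real.sqrt_sq (by norm_num)]]
    exact Real.sqrt_lt_sqrt (by norm_num) (by norm_num)
  have h2u : Real.sqrt 2 < 1.5 := by
    rw [show (1.5 : ℝ) = Real.sqrt (1.5 ^ 2) by
      rw [Real.sqrt_sq (by norm_num)]]
    exact Real.sqrt_lt_sqrt (by norm_num) (by norm_num)
  have h3l : (1.7 : ℝ) < Real.sqrt 3 := by
    rw [show (1.7 : ℝ) = Real.sqrt (1.7 ^ 2) by
      rw [Real.sqrt_sq (by norm_num)]]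
    exact Real.sqrt_lt_sqrt (by norm_num) (by norm_num)
  have h3u : Real.sqrt 3 < 1.8 := by
    rw [show (1.8 : ℝ) = Real.sqrt (1.8 ^ 2) by
      rw [Real.sqrt_sq (by norm_num)]]
    exact Real.sqrt_lt_sqrt (by norm_num) (by norm_num)
  refine ⟨?_, ?_, ?_, ?_⟩
  · have := det_fact 0
    simpa using this
  · simp only [List.pairwise_cons, List.mem_cons, List.mem_singleton, List.not_mem_nil,
      false_implies, implies_true, and_true, ne_eq, List.Pairwise.nil]
    refine ⟨fun a ha => ?_, fun a ha => ?_, fun a ha => ?_⟩ <;>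
      rcases ha with h | h | h | h <;> first
        | exact absurd h not_false
        | (subst h; intro he; linarith)
  · intro μ hμ
    constructor
    · simp only [List.mem_cons, List.not_mem_nil, or_false] at hμ
      rcases hμ with h | h | h | h <;> subst h <;> linarith
    · rw [eig_iff_det, det_fact]
      simp only [List.mem_cons, List.not_mem_nil, or_false] at hμ
      rcases hμ with h | h | h | h <;> subst h
      · apply mul_eq_zero_of_left; linear_combination 4 * s2
      · apply mul_eq_zero_of_right; linear_combination s3
      · apply mul_eq_zero_of_right; linear_combination s3
      · apply mul_eq_zero_of_left; linear_combination 4 * s2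
  · intro μ hμ
    rw [eig_iff_det, det_fact, mul_eq_zero] at hμ
    simp only [List.mem_cons, List.not_mem_nil, or_false]
    rcases hμ with h | h
    · have hf : (μ - 3 - 2 * Real.sqrt 2) * (μ - 3 + 2 * Real.sqrt 2) = 0 := by
        linear_combination h - 4 * s2
      rcases mul_eq_zero.mp hf with h' | h'
      · left; linarith
      · right; right; right; linarith
    · have hf : (μ - 2 - Real.sqrt 3) * (μ - 2 + Real.sqrt 3) = 0 := by
        linear_combination h - s3
      rcases mul_eq_zero.mp hf with h' | h'
      · right; left; linarith
      · right; right; left; linarith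
end

section
/- Ping-pong lemma for amalgamated products: Let A, B be subgroups of a group G, let C = A ∩ B, and suppose [A : C] > 2 and [B : C] ≥ 2. Suppose G acts on a set X containing two disjoint non-empty subsets X_A, X_B such that for all a ∈ A \ C, b ∈ B \ C, c ∈ C one has a·X_B ⊆ X_A, b·X_A ⊆ X_B, c·X_A ⊆ X_A, and c·X_B ⊆ X_B. Then the subgroup ⟨A, B⟩ of G is canonically isomorphic to the amalgamated free product A *_C B. -/
variable {G : Type*} [Group G]

/-- The two-element family of groups `A`, `B` (indexed by `Bool`). -/
def pingpongFam (A B : Subgroup G) : Bool → Type _ := fun b => cond b (↥A) (↥B)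

instance (A B : Subgroup G) : ∀ b, Group (pingpongFam A B b) := fun b => by
  cases b <;> · dsimp [pingpongFam]; infer_instance

/-- The inclusions of `C = A ⊓ B` into `A` and `B`. -/
def pingpongBase (A B : Subgroup G) : ∀ b, ↥(A ⊓ B) →* pingpongFam A B b := fun b =>
  match b with
  | true => Subgroup.inclusion inf_le_left
  | false => Subgroup.inclusion inf_le_right

/-- The inclusions of `A` and `B` into `G`. -/
def pingpongIncl (A B : Subgroup G) : ∀ b, pingpongFam A B b →* G := fun b =>
  match b with
  | true => A.subtype
  | false => B.subtype

theorem pingpongCompat (A B : Subgroup G) :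
    ∀ b, (pingpongIncl A B b).comp (pingpongBase A B b) = (A ⊓ B).subtype := fun b => by
  cases b <;> rfl

/-!
An element of `A *_C B` outside `C` has a reduced form `g₁ ⋯ gₙ` with letters alternately in
`A \ C` and `B \ C`, and its image in `G` is such an alternating product. If the first and last
letters lie in the same factor, say `A`, the product maps `X_B` into `X_A`, so it is not `1`
because `X_A` and `X_B` are disjoint and non-empty. Otherwise some conjugate of the product by an
element of `A \ C` is again alternating with both end letters in `A \ C`: finding a conjugator
that does not merge with the first letter into `C` is where `[A : C] > 2` is used.
-/

theorem Subgroup.exists_notMem_and_inv_mul_notMem (H : Subgroup G) {a₁ a₂ a₃ : G}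
    (h₁₂ : a₁⁻¹ * a₂ ∉ H) (h₁₃ : a₁⁻¹ * a₃ ∉ H) (h₂₃ : a₂⁻¹ * a₃ ∉ H) (z : G) :
    ∃ a ∈ ({a₁, a₂, a₃} : Set G), a ∉ H ∧ a⁻¹ * z ∉ H := by
  have same_coset {a b w : G} (ha : a⁻¹ * w ∈ H) (hb : b⁻¹ * w ∈ H) : a⁻¹ * b ∈ H := by
    simpa [mul_assoc] using mul_mem ha (inv_mem hb)
  by_contra! h
  have cases_of_mem {a : G} (ha : a ∈ ({a₁, a₂, a₃} : Set G)) : a⁻¹ * 1 ∈ H ∨ a⁻¹ * z ∈ H := by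
    rw [mul_one, inv_mem_iff]
    exact or_iff_not_imp_left.2 (h a ha)
  rcases cases_of_mem (a := a₁) (by simp) with d₁ | d₁ <;>
  rcases cases_of_mem (a := a₂) (by simp) with d₂ | d₂ <;>
  rcases cases_of_mem (a := a₃) (by simp) with d₃ | d₃
  all_goals first
    | exact h₁₂ (same_coset d₁ d₂) | exact h₁₃ (same_coset d₁ d₃) | exact h₂₃ (same_coset d₂ d₃)

namespace PingPong

/-- `g` is a product of letters alternately in `A \ (A ⊓ B)` and `B \ (A ⊓ B)`, whose first
letter lies in `cond i A B` and last letter in `cond e A B`. -/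
inductive Alternating (A B : Subgroup G) : Bool → Bool → G → Prop
  | single {i : Bool} {g : G} (hg : g ∈ cond i A B) (hgC : g ∉ A ⊓ B) : Alternating A B i i g
  | cons {i e : Bool} {g w : G} (hg : g ∈ cond i A B) (hgC : g ∉ A ⊓ B)
      (hw : Alternating A B (!i) e w) : Alternating A B i e (g * w)

variable {A B : Subgroup G}

theorem inf_le_cond (i : Bool) : A ⊓ B ≤ cond i A B := by
  cases i
  exacts [inf_le_right, inf_le_left]

namespace Alternating

theorem base_mul {c g : G} {i e : Bool} (hc : c ∈ A ⊓ B) (h : Alternating A B i e g) :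
    Alternating A B i e (c * g) := by
  cases h with
  | single hg hgC =>
    exact .single (mul_mem (inf_le_cond i hc) hg) ((Subgroup.mul_mem_cancel_left _ hc).not.2 hgC)
  | cons hg hgC hw =>
    rw [← mul_assoc]
    exact .cons (mul_mem (inf_le_cond i hc) hg) ((Subgroup.mul_mem_cancel_left _ hc).not.2 hgC) hw

theorem mul_base {c g : G} {i e : Bool} (hc : c ∈ A ⊓ B) (h : Alternating A B i e g) :
    Alternating A B i e (g * c) := by
  induction h with
  | single hg hgC =>
    exact .single (mul_mem hg (inf_le_cond _ hc)) ((Subgroup.mul_mem_cancel_right _ hc).not.2 hgC)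
  | cons hg hgC _ ih => rw [mul_assoc]; exact .cons hg hgC ih

theorem mul_single {i e : Bool} {g w : G} (hw : Alternating A B i e w) (hg : g ∈ cond (!e) A B)
    (hgC : g ∉ A ⊓ B) : Alternating A B i (!e) (w * g) := by
  induction hw with
  | single hw hwC => exact .cons hw hwC (.single hg hgC)
  | cons hw hwC _ ih => rw [mul_assoc]; exact .cons hw hwC (ih hg)

theorem inv {i e : Bool} {g : G} (h : Alternating A B i e g) : Alternating A B e i g⁻¹ := by
  induction h with
  | single hg hgC => exact .single (inv_mem hg) (by simpa using hgC)
  | @cons i e g w hg hgC _ ih =>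
    rw [mul_inv_rev]
    simpa using ih.mul_single (by simpa using inv_mem hg) (by simpa using hgC)

end Alternating

variable {X : Type*} [MulAction G X]

structure IsPingPongPair (A B : Subgroup G) (XA XB : Set X) : Prop where
  nonempty_left : XA.Nonempty
  nonempty_right : XB.Nonempty
  disjoint : Disjoint XA XB
  smul_left : ∀ a ∈ A, a ∉ A ⊓ B → ∀ x ∈ XB, a • x ∈ XA
  smul_right : ∀ b ∈ B, b ∉ A ⊓ B → ∀ x ∈ XA, b • x ∈ XB

variable {XA XB : Set X}

theorem IsPingPongPair.smul_mem (hP : IsPingPongPair A B XA XB) {i : Bool} {g : G}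
    (hg : g ∈ cond i A B) (hgC : g ∉ A ⊓ B) {x : X} (hx : x ∈ cond i XB XA) :
    g • x ∈ cond i XA XB := by
  cases i
  exacts [hP.smul_right g hg hgC x hx, hP.smul_left g hg hgC x hx]

namespace Alternating

theorem smul_mem (hP : IsPingPongPair A B XA XB) {i e : Bool} {g : G}
    (h : Alternating A B i e g) {x : X} (hx : x ∈ cond e XB XA) : g • x ∈ cond i XA XB := by
  induction h with
  | single hg hgC => exact hP.smul_mem hg hgC hx
  | @cons i e g w hg hgC _ ih =>
    rw [mul_smul]
    exact hP.smul_mem hg hgC (by cases i <;> exact ih hx)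

theorem ne_one_of_same (hP : IsPingPongPair A B XA XB) {i : Bool} {g : G}
    (h : Alternating A B i i g) : g ≠ 1 := by
  obtain ⟨x, hx⟩ : (cond i XB XA).Nonempty := by
    cases i
    exacts [hP.nonempty_left, hP.nonempty_right]
  intro hg
  have hgx := h.smul_mem hP hx
  rw [hg, one_smul] at hgx
  cases i
  exacts [hP.disjoint.ne_of_mem hx hgx rfl, hP.disjoint.ne_of_mem hgx hx rfl]

theorem ne_one (hP : IsPingPongPair A B XA XB)
    (hconj : ∀ z : G, ∃ t ∈ A, t ∉ A ⊓ B ∧ t * z ∉ A ⊓ B) {i e : Bool} {g : G}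
    (h : Alternating A B i e g) : g ≠ 1 := by
  suffices starts_A_ends_B : ∀ {g : G}, Alternating A B true false g → g ≠ 1 by
    cases i <;> cases e
    · exact h.ne_one_of_same hP
    · exact fun hg => starts_A_ends_B h.inv (by rw [hg, inv_one])
    · exact starts_A_ends_B h
    · exact h.ne_one_of_same hP
  intro g h hg
  rcases h with _ | @⟨_, _, a, w, ha, haC, hw⟩
  obtain ⟨t, ht, htC, htaC⟩ := hconj a
  have hconj_alt : Alternating A B true true (t * a * (w * t⁻¹)) :=
    .cons (mul_mem ht ha) htaC (hw.mul_single (inv_mem ht) (by simpa using htC))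
  refine hconj_alt.ne_one_of_same hP ?_
  calc t * a * (w * t⁻¹) = t * (a * w) * t⁻¹ := by group
    _ = 1 := by rw [hg, mul_one, mul_inv_cancel]

end Alternating

theorem exists_mem_notMem_and_mul_notMem {a₁ a₂ a₃ : G} (ha₁ : a₁ ∈ A) (ha₂ : a₂ ∈ A) (ha₃ : a₃ ∈ A)
    (ha₁₂ : a₁⁻¹ * a₂ ∉ A ⊓ B) (ha₁₃ : a₁⁻¹ * a₃ ∉ A ⊓ B) (ha₂₃ : a₂⁻¹ * a₃ ∉ A ⊓ B) (z : G) :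
    ∃ t ∈ A, t ∉ A ⊓ B ∧ t * z ∉ A ⊓ B := by
  obtain ⟨a, ha, haC, hazC⟩ := (A ⊓ B).exists_notMem_and_inv_mul_notMem ha₁₂ ha₁₃ ha₂₃ z
  refine ⟨a⁻¹, inv_mem ?_, by simpa using haC, hazC⟩
  rcases ha with rfl | rfl | rfl <;> assumption

open Monoid.PushoutI

abbrev pingpongLift (A B : Subgroup G) : Monoid.PushoutI (pingpongBase A B) →* G :=
  lift (pingpongIncl A B) (A ⊓ B).subtype (pingpongCompat A B)

theorem pingpongBase_injective (i : Bool) : Function.Injective (pingpongBase A B i) := by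
  cases i
  exacts [Subgroup.inclusion_injective inf_le_right, Subgroup.inclusion_injective inf_le_left]

theorem pingpongIncl_notMem_inf {i : Bool} {x : pingpongFam A B i}
    (hx : x ∉ (pingpongBase A B i).range) : pingpongIncl A B i x ∉ A ⊓ B := by
  cases i
  exacts [fun hC => hx ⟨⟨_, hC⟩, rfl⟩, fun hC => hx ⟨⟨_, hC⟩, rfl⟩]

theorem alternating_pingpongIncl {i : Bool} {x : pingpongFam A B i}
    (hx : x ∉ (pingpongBase A B i).range) :
    Alternating A B i i (pingpongIncl A B i x) := by
  cases i
  exacts [.single x.2 (pingpongIncl_notMem_inf hx), .single x.2 (pingpongIncl_notMem_inf hx)]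

theorem alternating_pingpongIncl_mul {i e : Bool} {x : pingpongFam A B i}
    (hx : x ∉ (pingpongBase A B i).range) {g : G} (hg : Alternating A B (!i) e g) :
    Alternating A B i e (pingpongIncl A B i x * g) := by
  cases i
  exacts [.cons x.2 (pingpongIncl_notMem_inf hx) hg, .cons x.2 (pingpongIncl_notMem_inf hx) hg]

theorem prod_mem_range_base_or_alternating (d : NormalWord.Transversal (pingpongBase A B))
    (w : NormalWord d) :
    w.prod ∈ (base (pingpongBase A B)).range ∨
      ∃ i e, w.fstIdx = some i ∧ Alternating A B i e (pingpongLift A B w.prod) := by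
  classical
  induction w using NormalWord.consRecOn with
  | empty => exact .inl ⟨1, by simp⟩
  | cons i x w hmw _ hx _ ih =>
    have hfst : (NormalWord.cons x w hmw hx).fstIdx = some i := by
      simp [NormalWord.cons, Monoid.CoprodI.Word.cons, Monoid.CoprodI.Word.fstIdx]
    rw [NormalWord.prod_cons, map_mul, lift_of]
    refine .inr ?_
    rcases ih with ⟨c, hc⟩ | ⟨s, e, hs, h⟩
    · refine ⟨i, i, hfst, ?_⟩
      rw [← hc, lift_base]
      exact (alternating_pingpongIncl hx).mul_base c.2
    · have hsi : s = !i := Bool.eq_not_of_ne fun hsi => hmw (hsi ▸ hs)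
      exact ⟨i, e, hfst, alternating_pingpongIncl_mul hx (hsi ▸ h)⟩
  | base c w _ ih =>
    rw [NormalWord.prod_smul]
    rcases ih with ⟨c', hc'⟩ | ⟨i, e, hi, h⟩
    · exact .inl ⟨c * c', by rw [map_mul, hc']⟩
    · refine .inr ⟨i, e, by rwa [NormalWord.base_smul_def], ?_⟩
      rw [map_mul, lift_base]
      exact h.base_mul c.2

theorem mem_range_base_or_alternating (g : Monoid.PushoutI (pingpongBase A B)) :
    g ∈ (base (pingpongBase A B)).range ∨ ∃ i e, Alternating A B i e (pingpongLift A B g) := by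
  classical
  obtain ⟨d⟩ := NormalWord.transversal_nonempty (pingpongBase A B) pingpongBase_injective
  have hg : (g • NormalWord.empty : NormalWord d).prod = g := by
    rw [NormalWord.prod_smul, NormalWord.prod_empty, mul_one]
  rw [← hg]
  exact (prod_mem_range_base_or_alternating d _).imp_right
    fun ⟨i, e, _, h⟩ => ⟨i, e, h⟩

theorem injective_pingpongLift (hP : IsPingPongPair A B XA XB)
    (hconj : ∀ z : G, ∃ t ∈ A, t ∉ A ⊓ B ∧ t * z ∉ A ⊓ B) :
    Function.Injective (pingpongLift A B) := by
  refine (injective_iff_map_eq_one _).2 fun g hg => ?_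
  rcases mem_range_base_or_alternating g with ⟨c, rfl⟩ | ⟨i, e, h⟩
  · rw [lift_base] at hg
    rw [show c = 1 from Subtype.ext hg, map_one]
  · exact absurd hg (h.ne_one hP hconj)

theorem range_pingpongLift : (pingpongLift A B).range = A ⊔ B := by
  refine le_antisymm ?_ (sup_le ?_ ?_)
  · rintro _ ⟨g, rfl⟩
    induction g using Monoid.PushoutI.induction_on with
    | of i x =>
      rw [lift_of]
      cases i
      exacts [Subgroup.mem_sup_right x.2, Subgroup.mem_sup_left x.2]
    | base c =>
      rw [lift_base]
      exact Subgroup.mem_sup_left c.2.1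
    | mul x y hx hy =>
      rw [map_mul]
      exact mul_mem hx hy
  · exact fun x hx => ⟨of true ⟨x, hx⟩, lift_of _ _ _ _⟩
  · exact fun x hx => ⟨of false ⟨x, hx⟩, lift_of _ _ _ _⟩

end PingPong

theorem stmt_15_general (A B : Subgroup G)
    -- `[A : A ⊓ B] > 2`: three elements of `A` in pairwise distinct `(A ⊓ B)`-cosets
    (a₁ a₂ a₃ : G) (ha₁ : a₁ ∈ A) (ha₂ : a₂ ∈ A) (ha₃ : a₃ ∈ A)
    (ha₁₂ : a₁⁻¹ * a₂ ∉ A ⊓ B) (ha₁₃ : a₁⁻¹ * a₃ ∉ A ⊓ B) (ha₂₃ : a₂⁻¹ * a₃ ∉ A ⊓ B)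
    (X : Type*) [MulAction G X] (XA XB : Set X)
    (hXA : XA.Nonempty) (hXB : XB.Nonempty) (hdisj : Disjoint XA XB)
    (hA : ∀ a ∈ A, a ∉ A ⊓ B → ∀ x ∈ XB, a • x ∈ XA)
    (hB : ∀ b ∈ B, b ∉ A ⊓ B → ∀ x ∈ XA, b • x ∈ XB) :
    Function.Injective
      ⇑(Monoid.PushoutI.lift (pingpongIncl A B) (A ⊓ B).subtype (pingpongCompat A B)) ∧
    (Monoid.PushoutI.lift (pingpongIncl A B) (A ⊓ B).subtype (pingpongCompat A B)).range
      = Subgroup.closure (↑A ∪ ↑B) :=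
  ⟨PingPong.injective_pingpongLift ⟨hXA, hXB, hdisj, hA, hB⟩
      (PingPong.exists_mem_notMem_and_mul_notMem ha₁ ha₂ ha₃ ha₁₂ ha₁₃ ha₂₃),
    by rw [PingPong.range_pingpongLift, Subgroup.closure_union, Subgroup.closure_eq,
      Subgroup.closure_eq]⟩

/-- **Ping-pong lemma for amalgamated products.** If `[A : A ⊓ B] > 2`,
`[B : A ⊓ B] ≥ 2`, and `G` acts on a set `X` with disjoint non-empty subsets
`X_A`, `X_B` satisfying the ping-pong conditions, then the canonical map from the
amalgamated free product `A *_{A ⊓ B} B` (the pushout of the inclusions of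
`A ⊓ B` into `A` and `B`) to `G` is injective, with image `⟨A, B⟩`. -/
theorem stmt_15 (A B : Subgroup G)
    -- `[A : A ⊓ B] > 2`: three elements of `A` in pairwise distinct `(A ⊓ B)`-cosets
    (a₁ a₂ a₃ : G) (ha₁ : a₁ ∈ A) (ha₂ : a₂ ∈ A) (ha₃ : a₃ ∈ A)
    (ha₁₂ : a₁⁻¹ * a₂ ∉ A ⊓ B) (ha₁₃ : a₁⁻¹ * a₃ ∉ A ⊓ B) (ha₂₃ : a₂⁻¹ * a₃ ∉ A ⊓ B)
    -- `[B : A ⊓ B] ≥ 2`: an element of `B` outside `A ⊓ B`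
    (b₀ : G) (hb₀ : b₀ ∈ B) (hb₀' : b₀ ∉ A ⊓ B)
    (X : Type*) [MulAction G X] (XA XB : Set X)
    (hXA : XA.Nonempty) (hXB : XB.Nonempty) (hdisj : Disjoint XA XB)
    (hA : ∀ a ∈ A, a ∉ A ⊓ B → ∀ x ∈ XB, a • x ∈ XA)
    (hB : ∀ b ∈ B, b ∉ A ⊓ B → ∀ x ∈ XA, b • x ∈ XB)
    (hCA : ∀ c ∈ A ⊓ B, ∀ x ∈ XA, c • x ∈ XA)
    (hCB : ∀ c ∈ A ⊓ B, ∀ x ∈ XB, c • x ∈ XB) :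
    Function.Injective
      ⇑(Monoid.PushoutI.lift (pingpongIncl A B) (A ⊓ B).subtype (pingpongCompat A B)) ∧
    (Monoid.PushoutI.lift (pingpongIncl A B) (A ⊓ B).subtype (pingpongCompat A B)).range
      = Subgroup.closure (↑A ∪ ↑B) :=
  stmt_15_general A B a₁ a₂ a₃ ha₁ ha₂ ha₃ ha₁₂ ha₁₃ ha₂₃ X XA XB hXA hXB hdisj hA hB
end

section
/- If a finitely generated group G is virtually free, then G embeds into SL_n(ℤ) for some integer n ≥ 2. -/
open Matrix

local notation "SL2" => Matrix.SpecialLinearGroup (Fin 2) ℤ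

/-- nonzero integer vectors -/
def VV : Type := {v : Fin 2 → ℤ // v ≠ 0}

noncomputable instance : MulAction SL2 VV where
  smul g v := ⟨Matrix.SpecialLinearGroup.toLin' g v.1, by
    intro h
    exact v.2 ((Matrix.SpecialLinearGroup.toLin' g).toEquiv.injective
      (by simpa using h))⟩
  one_smul v := by
    apply Subtype.ext
    show Matrix.SpecialLinearGroup.toLin' 1 v.1 = v.1
    simp
  mul_smul g h v := by
    apply Subtype.ext
    show Matrix.SpecialLinearGroup.toLin' (g * h) v.1
      = Matrix.SpecialLinearGroup.toLin' g (Matrix.SpecialLinearGroup.toLin' h v.1)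
    rw [_root_.map_mul]; rfl

lemma VV_smul_def (g : SL2) (v : VV) :
    (g • v).1 = (g : Matrix (Fin 2) (Fin 2) ℤ).mulVec v.1 := by
  show Matrix.SpecialLinearGroup.toLin' g v.1 = _
  rw [Matrix.SpecialLinearGroup.toLin'_apply, Matrix.toLin'_apply]

/-- The Sanov-type generator with integer slope `s`. -/
def sanov (s : ℤ) : SL2 :=
  ⟨!![1 - 5*s, 5; -5*s^2, 1 + 5*s], by simp [Matrix.det_fin_two]; ring⟩

lemma sanov_smul (s : ℤ) (v : VV) :
    ((sanov s) • v).1 = ![(1 - 5*s) * v.1 0 + 5 * v.1 1,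
      (-5*s^2) * v.1 0 + (1 + 5*s) * v.1 1] := by
  rw [VV_smul_def]
  funext i
  fin_cases i <;>
    simp [sanov, Matrix.mulVec, dotProduct, Fin.sum_univ_two] <;> ring

/-- inverse of sanov -/
def sanovInv (s : ℤ) : SL2 :=
  ⟨!![1 + 5*s, -5; 5*s^2, 1 - 5*s], by simp [Matrix.det_fin_two]; ring⟩

lemma sanov_inv_eq (s : ℤ) : (sanov s)⁻¹ = sanovInv s := by
  rw [inv_eq_iff_mul_eq_one]
  apply Subtype.ext
  show (sanov s).1 * (sanovInv s).1 = 1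
  simp [sanov, sanovInv]
  ext i j
  fin_cases i <;> fin_cases j <;>
    simp [Matrix.mul_apply, Fin.sum_univ_two, Matrix.one_apply] <;> ring

lemma sanovInv_smul (s : ℤ) (v : VV) :
    ((sanovInv s) • v).1 = ![(1 + 5*s) * v.1 0 - 5 * v.1 1,
      (5*s^2) * v.1 0 + (1 - 5*s) * v.1 1] := by
  rw [VV_smul_def]
  funext i
  fin_cases i <;>
    simp [sanovInv, Matrix.mulVec, dotProduct, Fin.sum_univ_two] <;> ring

/-- coordinates -/
def uu (v : VV) : ℤ := v.1 0
def tt (s : ℤ) (v : VV) : ℤ := v.1 1 - s * v.1 0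

lemma uu_tt_ne_zero (s : ℤ) (v : VV) : uu v ≠ 0 ∨ tt s v ≠ 0 := by
  by_contra h
  push_neg at h
  apply v.2
  have h0 : v.1 0 = 0 := h.1
  have h1 : v.1 1 = 0 := by have := h.2; simp [tt, h0] at this; exact this
  funext i; fin_cases i <;> assumption

def Xset (s : ℤ) : Set VV :=
  {v | (0 ≤ tt s v ∧ 2 * |tt s v| < uu v) ∨ (tt s v < 0 ∧ uu v < -(2 * |tt s v|))}

def Yset (s : ℤ) : Set VV :=
  {v | (0 ≤ tt s v ∧ uu v < -(2 * |tt s v|)) ∨ (tt s v < 0 ∧ 2 * |tt s v| < uu v)}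

lemma abs_lt_of_mem {s : ℤ} {v : VV} (h : v ∈ Xset s ∪ Yset s) :
    2 * |tt s v| < |uu v| := by
  rcases h with h | h <;> rcases h with ⟨h1, h2⟩ | ⟨h1, h2⟩ <;>
    cases' abs_cases (uu v) with hu hu <;>
    cases' abs_cases (tt s v) with ht ht <;> linarith

lemma disj_of_ne {s s' : ℤ} (hss : s ≠ s') {v : VV}
    (h : v ∈ Xset s ∪ Yset s) (h' : v ∈ Xset s' ∪ Yset s') : False := by
  have h1 := abs_lt_of_mem h
  have h2 := abs_lt_of_mem h'
  have key : tt s v - tt s' v = (s' - s) * uu v := by simp [tt, uu]; ring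
  have hss' : 1 ≤ |s' - s| := Int.one_le_abs (sub_ne_zero.mpr (Ne.symm hss))
  have : |uu v| ≤ |s' - s| * |uu v| := le_mul_of_one_le_left (abs_nonneg _) hss'
  rw [← abs_mul, ← key] at this
  have htri : |tt s v - tt s' v| ≤ |tt s v| + |tt s' v| := abs_sub _ _
  have ha := abs_nonneg (tt s v)
  have hb := abs_nonneg (tt s' v)
  linarith

lemma disjXY {s : ℤ} {v : VV} (h : v ∈ Xset s) (h' : v ∈ Yset s) : False := by
  have ha := abs_nonneg (tt s v)
  rcases h with ⟨h1, h2⟩ | ⟨h1, h2⟩ <;> rcases h' with ⟨h1', h2'⟩ | ⟨h1', h2'⟩ <;> linarith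

lemma sanov_maps (s : ℤ) (v : VV) (h : v ∉ Yset s) : (sanov s) • v ∈ Xset s := by
  have hu : uu ((sanov s) • v) = uu v + 5 * tt s v := by
    simp [uu, tt, sanov_smul]; ring
  have ht : tt s ((sanov s) • v) = tt s v := by
    simp [uu, tt, sanov_smul]; ring
  simp only [Xset, Set.mem_setOf_eq, hu, ht]
  simp only [Yset, Set.mem_setOf_eq, not_or, not_and, not_lt] at h
  obtain ⟨hY1, hY2⟩ := h
  rcases lt_trichotomy (tt s v) 0 with h0 | h0 | h0
  · right
    have := hY2 h0
    refine ⟨h0, ?_⟩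
    rw [abs_of_neg h0] at this ⊢
    linarith
  · left
    have := hY1 (le_of_eq h0.symm)
    have hne := uu_tt_ne_zero s v
    rw [h0] at this ⊢
    simp at this ⊢
    rcases hne with h | h
    · omega
    · exact absurd h0 h
  · left
    have := hY1 (le_of_lt h0)
    refine ⟨le_of_lt h0, ?_⟩
    rw [abs_of_pos h0] at this ⊢
    linarith

lemma sanovInv_maps (s : ℤ) (v : VV) (h : v ∉ Xset s) : (sanovInv s) • v ∈ Yset s := by
  have hu : uu ((sanovInv s) • v) = uu v - 5 * tt s v := by
    simp [uu, tt, sanovInv_smul]; ring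
  have ht : tt s ((sanovInv s) • v) = tt s v := by
    simp [uu, tt, sanovInv_smul]; ring
  simp only [Yset, Set.mem_setOf_eq, hu, ht]
  simp only [Xset, Set.mem_setOf_eq, not_or, not_and, not_lt] at h
  obtain ⟨hX1, hX2⟩ := h
  rcases lt_trichotomy (tt s v) 0 with h0 | h0 | h0
  · right
    have := hX2 h0
    refine ⟨h0, ?_⟩
    rw [abs_of_neg h0] at this ⊢
    linarith
  · left
    have := hX1 (le_of_eq h0.symm)
    have hne := uu_tt_ne_zero s v
    rw [h0] at this ⊢
    simp at this ⊢
    rcases hne with h | h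
    · omega
    · exact absurd h0 h
  · left
    have := hX1 (le_of_lt h0)
    refine ⟨le_of_lt h0, ?_⟩
    rw [abs_of_pos h0] at this ⊢
    linarith

open Pointwise in
theorem freeGroup_embeds_SL2 (κ : Type) [Finite κ] [Nontrivial κ] :
    ∃ ρ : FreeGroup κ →* SL2, Function.Injective ρ := by
  cases nonempty_fintype κ
  set e : κ → ℤ := fun k => ((Fintype.equivFin κ) k : ℤ) with he
  have he_inj : Function.Injective e := by
    intro a b hab
    apply (Fintype.equivFin κ).injective
    have h2 : (((Fintype.equivFin κ) a : ℕ) : ℤ) = (((Fintype.equivFin κ) b : ℕ) : ℤ) := hab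
    exact Fin.ext (Int.ofNat.inj h2)
  set a : κ → SL2 := fun k => sanov (e k) with ha
  refine ⟨FreeGroup.lift a, ?_⟩
  apply FreeGroup.injective_lift_of_ping_pong a (fun k => Xset (e k)) (fun k => Yset (e k))
  · intro k
    refine ⟨⟨![1, e k], ?_⟩, ?_⟩
    · intro h
      have : (![1, e k] : Fin 2 → ℤ) 0 = 0 := by rw [h]; rfl
      simp at this
    · left
      constructor
      · simp [tt]
      · simp [tt, uu]
  · intro k l hkl
    show Disjoint (Xset (e k)) (Xset (e l))
    rw [Set.disjoint_left]
    intro v hv hv'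
    exact disj_of_ne (fun h => hkl (he_inj h)) (Or.inl hv) (Or.inl hv')
  · intro k l hkl
    show Disjoint (Yset (e k)) (Yset (e l))
    rw [Set.disjoint_left]
    intro v hv hv'
    exact disj_of_ne (fun h => hkl (he_inj h)) (Or.inr hv) (Or.inr hv')
  · intro k l
    rw [Set.disjoint_left]
    intro v hv hv'
    by_cases h : k = l
    · subst h; exact disjXY hv hv'
    · exact disj_of_ne (fun hh => h (he_inj hh)) (Or.inl hv) (Or.inr hv')
  · intro k x hx
    rw [Set.mem_smul_set] at hx
    obtain ⟨v, hv, rfl⟩ := hx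
    exact sanov_maps (e k) v hv
  · intro k x hx
    rw [Set.mem_smul_set] at hx
    obtain ⟨v, hv, rfl⟩ := hx
    have : a⁻¹ k = sanovInv (e k) := by
      rw [Pi.inv_apply, ha, sanov_inv_eq]
    rw [this]
    exact sanovInv_maps (e k) v hv

theorem freeGroup_finite_embeds_SL2 (ι : Type) [Finite ι] :
    ∃ ρ : FreeGroup ι →* SL2, Function.Injective ρ := by
  rcases isEmpty_or_nonempty ι with hι | hι
  · refine ⟨1, ?_⟩
    have hall : ∀ x : FreeGroup ι, x = 1 := by
      intro x
      rw [← FreeGroup.toWord_eq_nil_iff]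
      cases h : x.toWord with
      | nil => rfl
      | cons a l => exact (IsEmpty.false a.1).elim
    intro x y _
    rw [hall x, hall y]
  · inhabit ι
    have : Nontrivial (ι ⊕ Bool) :=
      ⟨⟨Sum.inr true, Sum.inr false, by simp⟩⟩
    obtain ⟨ρ, hρ⟩ := freeGroup_embeds_SL2 (ι ⊕ Bool)
    refine ⟨ρ.comp (FreeGroup.map Sum.inl), hρ.comp ?_⟩
    have hli : Function.LeftInverse
        (FreeGroup.map (Sum.elim id fun _ : Bool => (default : ι)))
        (FreeGroup.map (Sum.inl : ι → ι ⊕ Bool)) := by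
      intro x
      rw [FreeGroup.map.comp]
      exact FreeGroup.map.id' x
    exact hli.injective

theorem finite_of_fg_freeGroup (ι : Type) [h : Group.FG (FreeGroup ι)] : Finite ι := by
  obtain ⟨S, hS⟩ := Group.FG.out (G := FreeGroup ι)
  classical
  set T : Finset ι := S.biUnion (fun g => (g.toWord.map Prod.fst).toFinset) with hT
  have hmem : ∀ i : ι, i ∈ T := by
    intro i
    by_contra hi
    set f : ι → Multiplicative ℤ :=
      fun j => if j = i then Multiplicative.ofAdd (1 : ℤ) else 1 with hf
    set φ : FreeGroup ι →* Multiplicative ℤ := FreeGroup.lift f with hφ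
    have hker : ∀ g ∈ (S : Set (FreeGroup ι)), g ∈ φ.ker := by
      intro g hg
      rw [MonoidHom.mem_ker, hφ]
      have : φ g = φ (FreeGroup.mk g.toWord) := by rw [FreeGroup.mk_toWord]
      rw [← FreeGroup.mk_toWord (x := g), FreeGroup.lift_mk]
      apply List.prod_eq_one
      intro x hx
      rw [List.mem_map] at hx
      obtain ⟨p, hp, rfl⟩ := hx
      have hpi : p.1 ≠ i := by
        intro hpe
        apply hi
        rw [hT]
        rw [Finset.mem_biUnion]
        exact ⟨g, hg, by rw [List.mem_toFinset, List.mem_map]; exact ⟨p, hp, hpe⟩⟩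
      have : f p.1 = 1 := by rw [hf]; simp [hpi]
      cases p.2 <;> simp [this]
    have htop : (⊤ : Subgroup (FreeGroup ι)) ≤ φ.ker := by
      rw [← hS]
      exact (Subgroup.closure_le _).mpr hker
    have h1 : φ (FreeGroup.of i) = 1 := htop (Subgroup.mem_top _)
    rw [hφ, FreeGroup.lift_apply_of, hf] at h1
    simp at h1
  exact Finite.of_injective (fun i => (⟨i, hmem i⟩ : {x // x ∈ T})) (fun a b hab => by
    simpa using congrArg Subtype.val hab)

theorem induced_embedding {G : Type*} [Group G] (H : Subgroup G) (hidx : H.index ≠ 0)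
    (ρ : H →* SL2) (hρ : Function.Injective ρ) :
    ∃ n : ℕ, 2 ≤ n ∧ ∃ f : G →* Matrix.SpecialLinearGroup (Fin n) ℤ,
      Function.Injective f := by
  classical
  haveI : Fintype (G ⧸ H) := H.fintypeOfIndexNeZero hidx
  set Q := G ⧸ H with hQ
  -- the cocycle
  have hcoc : ∀ (g : G) (q : Q), (g • q).out⁻¹ * g * q.out ∈ H := by
    intro g q
    rw [mul_assoc, ← QuotientGroup.eq, QuotientGroup.out_eq']
    rw [show g * q.out = g • q.out from rfl, ← MulAction.Quotient.smul_mk,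
      QuotientGroup.out_eq']
  set hh : G → Q → H := fun g q => ⟨(g • q).out⁻¹ * g * q.out, hcoc g q⟩ with hhh
  have hh_coc : ∀ (g₁ g₂ : G) (q : Q), hh (g₁ * g₂) q = hh g₁ (g₂ • q) * hh g₂ q := by
    intro g₁ g₂ q
    apply Subtype.ext
    show ((g₁ * g₂) • q).out⁻¹ * (g₁ * g₂) * q.out
      = ((g₁ • g₂ • q).out⁻¹ * g₁ * (g₂ • q).out) * ((g₂ • q).out⁻¹ * g₂ * q.out)
    rw [mul_smul]
    group
  set β := Q × Fin 2 with hβ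
  set M : G → Matrix β β ℤ := fun g => Matrix.of (fun p r =>
    if g • r.1 = p.1 then (ρ (hh g r.1)).1 p.2 r.2 else 0) with hM
  have hM_apply : ∀ (g : G) (p r : β),
      M g p r = if g • r.1 = p.1 then (ρ (hh g r.1)).1 p.2 r.2 else 0 := fun _ _ _ => rfl
  have Mone : M 1 = 1 := by
    ext ⟨q', a⟩ ⟨q, b⟩
    rw [hM_apply]
    have h1 : hh 1 q = 1 := by
      apply Subtype.ext
      show (((1 : G)) • q).out⁻¹ * 1 * q.out = 1
      rw [one_smul]
      group
    show (if (1:G) • q = q' then (ρ (hh 1 q)).1 a b else 0) = (1 : Matrix β β ℤ) (q', a) (q, b)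
    rw [one_smul, h1, _root_.map_one, Matrix.one_apply (i := ((q', a) : β))]
    by_cases h : q = q'
    · subst h
      rw [if_pos rfl, Matrix.SpecialLinearGroup.coe_one, Matrix.one_apply]
      by_cases hab : a = b
      · subst hab
        rw [if_pos rfl, if_pos rfl]
      · rw [if_neg hab, if_neg (by simp [Prod.ext_iff, hab])]
    · rw [if_neg h, if_neg (fun hc => h (congrArg Prod.fst hc).symm)]
  have Mmul : ∀ g₁ g₂ : G, M (g₁ * g₂) = M g₁ * M g₂ := by
    intro g₁ g₂
    ext ⟨q'', a⟩ ⟨q, b⟩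
    rw [Matrix.mul_apply, Fintype.sum_prod_type]
    rw [Finset.sum_eq_single (g₂ • q)]
    · by_cases h : (g₁ * g₂) • q = q''
      · have h' : g₁ • (g₂ • q) = q'' := by rw [← mul_smul]; exact h
        rw [hM_apply, if_pos h, hh_coc, _root_.map_mul,
          Matrix.SpecialLinearGroup.coe_mul, Matrix.mul_apply]
        apply Finset.sum_congr rfl
        intro c _
        rw [hM_apply, hM_apply, if_pos rfl, if_pos h']
      · have h' : ¬ (g₁ • (g₂ • q) = q'') := by rw [← mul_smul]; exact h
        rw [hM_apply, if_neg h]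
        symm
        apply Finset.sum_eq_zero
        intro c _
        rw [hM_apply, if_neg h', zero_mul]
    · intro q' _ hq'
      apply Finset.sum_eq_zero
      intro c _
      rw [hM_apply (g₂) ((q', c)) ((q, b)), if_neg (fun hc => hq' hc.symm), mul_zero]
    · intro hc
      exact absurd (Finset.mem_univ _) hc
  have Minv : ∀ g : G, M g * M g⁻¹ = 1 := by
    intro g
    rw [← Mmul, mul_inv_cancel, Mone]
  have hdet2 : ∀ g : G, (M g).det * (M g).det = 1 := by
    intro g
    have h1 : (M g).det * (M g⁻¹).det = 1 := by
      rw [← Matrix.det_mul, Minv, Matrix.det_one]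
    have := Int.isUnit_iff.mp (IsUnit.of_mul_eq_one _ h1)
    rcases this with h | h <;> rw [h] <;> norm_num
  -- the block matrices
  set N : G → Matrix (β ⊕ Unit) (β ⊕ Unit) ℤ := fun g =>
    Matrix.fromBlocks (M g) 0 0 (Matrix.diagonal fun _ : Unit => (M g).det) with hN
  have hNdet : ∀ g : G, (N g).det = 1 := by
    intro g
    show (Matrix.fromBlocks (M g) 0 0 (Matrix.diagonal fun _ : Unit => (M g).det)).det = 1
    rw [Matrix.det_fromBlocks_zero₂₁, Matrix.det_diagonal]
    simp [hdet2 g]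
  set Ψ : G →* Matrix.SpecialLinearGroup (β ⊕ Unit) ℤ :=
    { toFun := fun g => ⟨N g, hNdet g⟩
      map_one' := by
        apply Subtype.ext
        show N 1 = 1
        show Matrix.fromBlocks (M 1) 0 0 (Matrix.diagonal fun _ : Unit => (M 1).det) = 1
        rw [Mone, Matrix.det_one]
        rw [show (Matrix.diagonal fun _ : Unit => (1:ℤ)) = 1 from Matrix.diagonal_one]
        exact Matrix.fromBlocks_one
      map_mul' := by
        intro g₁ g₂
        apply Subtype.ext
        show N (g₁ * g₂) = N g₁ * N g₂
        show Matrix.fromBlocks (M (g₁ * g₂)) 0 0 (Matrix.diagonal fun _ : Unit => (M (g₁*g₂)).det)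
          = Matrix.fromBlocks (M g₁) 0 0 (Matrix.diagonal fun _ : Unit => (M g₁).det)
          * Matrix.fromBlocks (M g₂) 0 0 (Matrix.diagonal fun _ : Unit => (M g₂).det)
        rw [Matrix.fromBlocks_multiply]
        simp only [Matrix.mul_zero, Matrix.zero_mul, add_zero, zero_add,
          Matrix.diagonal_mul_diagonal]
        rw [Mmul, Matrix.det_mul] } with hΨ
  have hΨ_apply : ∀ g : G, (Ψ g).1 = N g := fun _ => rfl
  have hΨinj : Function.Injective Ψ := by
    rw [injective_iff_map_eq_one]
    intro g hg
    have hNg : N g = 1 := congrArg Subtype.val hg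
    have hMg : M g = 1 := by
      have h1 : (1 : Matrix (β ⊕ Unit) (β ⊕ Unit) ℤ)
          = Matrix.fromBlocks 1 0 0 1 := Matrix.fromBlocks_one.symm
      have h2 := congrArg Matrix.toBlocks₁₁ (hNg.trans h1)
      show M g = 1
      have h3 : N g = Matrix.fromBlocks (M g) 0 0
          (Matrix.diagonal fun _ : Unit => (M g).det) := rfl
      rw [h3] at h2
      rwa [Matrix.toBlocks_fromBlocks₁₁, Matrix.toBlocks_fromBlocks₁₁] at h2
    -- first: g fixes all cosets
    have hfix : ∀ q : Q, g • q = q := by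
      intro q
      by_contra hne
      have hzero : ∀ a b : Fin 2, (ρ (hh g q)).1 a b = 0 := by
        intro a b
        have hq := congrFun (congrFun hMg ((g • q, a) : β)) ((q, b) : β)
        rw [hM_apply, if_pos rfl, Matrix.one_apply,
          if_neg (fun hc => hne (congrArg Prod.fst hc))] at hq
        exact hq
      have hdet := (ρ (hh g q)).2
      rw [Matrix.det_fin_two, hzero, hzero, hzero, hzero] at hdet
      norm_num at hdet
    -- then: all the H-components are 1
    have hone : ∀ q : Q, hh g q = 1 := by
      intro q
      apply hρ
      rw [_root_.map_one]
      apply Subtype.ext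
      ext a b
      have hq := congrFun (congrFun hMg ((q, a) : β)) ((q, b) : β)
      rw [hM_apply, if_pos (hfix q), Matrix.one_apply] at hq
      rw [hq, Matrix.SpecialLinearGroup.coe_one, Matrix.one_apply]
      by_cases hab : a = b
      · subst hab
        rw [if_pos rfl, if_pos rfl]
      · rw [if_neg (by simp [Prod.ext_iff, hab]), if_neg hab]
    have h1 := hone (QuotientGroup.mk 1)
    have h2 : (g • (QuotientGroup.mk 1 : Q)).out⁻¹ * g * (QuotientGroup.mk 1 : Q).out = 1 :=
      congrArg Subtype.val h1
    rw [hfix] at h2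
    have h3 : g = (QuotientGroup.mk 1 : Q).out
        * ((QuotientGroup.mk 1 : Q).out⁻¹ * g * (QuotientGroup.mk 1 : Q).out)
        * (QuotientGroup.mk 1 : Q).out⁻¹ := by group
    rw [h2, mul_one, mul_inv_cancel] at h3
    exact h3
  -- reindex to Fin n
  set n := Fintype.card (β ⊕ Unit) with hn
  have hn2 : 2 ≤ n := by
    rw [hn, Fintype.card_sum, Fintype.card_prod, Fintype.card_fin]
    have : 1 ≤ Fintype.card Q := Fintype.card_pos_iff.mpr ⟨QuotientGroup.mk 1⟩
    omega
  set e : (β ⊕ Unit) ≃ Fin n := Fintype.equivFin _ with he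
  set f : G →* Matrix.SpecialLinearGroup (Fin n) ℤ :=
    { toFun := fun g => ⟨(Ψ g).1.submatrix e.symm e.symm, by
        rw [Matrix.det_submatrix_equiv_self]
        exact (Ψ g).2⟩
      map_one' := by
        apply Subtype.ext
        show ((Ψ 1).1).submatrix e.symm e.symm = 1
        rw [_root_.map_one]
        exact Matrix.submatrix_one_equiv e.symm
      map_mul' := by
        intro g₁ g₂
        apply Subtype.ext
        show ((Ψ (g₁ * g₂)).1).submatrix e.symm e.symm = _
        rw [_root_.map_mul]
        show ((Ψ g₁).1 * (Ψ g₂).1).submatrix e.symm e.symm = _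
        rw [← Matrix.submatrix_mul_equiv (Ψ g₁).1 (Ψ g₂).1 _ e.symm _]
        rfl } with hf
  refine ⟨n, hn2, f, ?_⟩
  intro g₁ g₂ hgg
  apply hΨinj
  apply Subtype.ext
  have hmm : ((Ψ g₁).1).submatrix e.symm e.symm = ((Ψ g₂).1).submatrix e.symm e.symm :=
    congrArg Subtype.val hgg
  have h5 := congrArg (fun m => Matrix.submatrix m e e) hmm
  simpa [Matrix.submatrix_submatrix] using h5

/-- Every finitely generated virtually free group embeds into `SL_n(ℤ)` for
some `n ≥ 2`. -/
theorem stmt_16 (G : Type*) [Group G] [hfg : Group.FG G]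
    (hvf : ∃ H : Subgroup G, H.index ≠ 0 ∧ ∃ ι : Type, Nonempty (H ≃* FreeGroup ι)) :
    ∃ n : ℕ, 2 ≤ n ∧ ∃ f : G →* Matrix.SpecialLinearGroup (Fin n) ℤ,
      Function.Injective f := by
  obtain ⟨H, hidx, ι, ⟨φ⟩⟩ := hvf
  haveI : H.FiniteIndex := ⟨hidx⟩
  haveI : Group.FG H := H.fg_of_index_ne_zero
  haveI : Group.FG (FreeGroup ι) := Group.fg_of_surjective (f := φ.toMonoidHom) φ.surjective
  haveI : Finite ι := finite_of_fg_freeGroup ι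
  obtain ⟨ρ₀, hρ₀⟩ := freeGroup_finite_embeds_SL2 ι
  exact induced_embedding H hidx (ρ₀.comp φ.toMonoidHom) (hρ₀.comp φ.injective)
end

section
/- Every finite sharply 3-transitive group contains a point stabiliser that is a sharply 2-transitive group, and every finite sharply 2-transitive group has a non-trivial normal abelian subgroup (i.e., is split). -/
namespace Stmt18Aux

abbrev Sharp2 (G X : Type) [Group G] [MulAction G X] : Prop :=
  ∀ x₁ x₂ y₁ y₂ : X, x₁ ≠ x₂ → y₁ ≠ y₂ → ∃! g : G, g • x₁ = y₁ ∧ g • x₂ = y₂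

variable {G X : Type} [Group G] [MulAction G X]

lemma rigid (h2 : Sharp2 G X) {z w : X} (hzw : z ≠ w) {g : G}
    (hz : g • z = z) (hw : g • w = w) : g = 1 := by
  obtain ⟨u, -, hu⟩ := h2 z w z w hzw hzw
  rw [hu g ⟨hz, hw⟩, hu 1 ⟨one_smul G z, one_smul G w⟩]

lemma pick {a b : X} (hab : a ≠ b) (x : X) : ∃ y : X, y ≠ x := by
  rcases eq_or_ne x a with rfl | h
  · exact ⟨b, Ne.symm hab⟩
  · exact ⟨a, Ne.symm h⟩

/-- the unique element moving a pair to a pair -/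
noncomputable def tr (h2 : Sharp2 G X) {x₁ x₂ y₁ y₂ : X} (h : x₁ ≠ x₂) (h' : y₁ ≠ y₂) : G :=
  (h2 x₁ x₂ y₁ y₂ h h').choose

lemma tr_fst (h2 : Sharp2 G X) {x₁ x₂ y₁ y₂ : X} (h : x₁ ≠ x₂) (h' : y₁ ≠ y₂) :
    tr h2 h h' • x₁ = y₁ := (h2 x₁ x₂ y₁ y₂ h h').choose_spec.1.1

lemma tr_snd (h2 : Sharp2 G X) {x₁ x₂ y₁ y₂ : X} (h : x₁ ≠ x₂) (h' : y₁ ≠ y₂) :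
    tr h2 h h' • x₂ = y₂ := (h2 x₁ x₂ y₁ y₂ h h').choose_spec.1.2

lemma tr_uniq (h2 : Sharp2 G X) {x₁ x₂ y₁ y₂ : X} (h : x₁ ≠ x₂) (h' : y₁ ≠ y₂)
    {g : G} (hg1 : g • x₁ = y₁) (hg2 : g • x₂ = y₂) : g = tr h2 h h' :=
  (h2 x₁ x₂ y₁ y₂ h h').choose_spec.2 g ⟨hg1, hg2⟩

lemma swap_ex (h2 : Sharp2 G X) {z w : X} (h : z ≠ w) :
    ∃ s : G, (s • z = w ∧ s • w = z) ∧ (s * s = 1 ∧ s ≠ 1) ∧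
      ∀ s' : G, s' • z = w → s' • w = z → s' = s := by
  obtain ⟨s, ⟨h1, h2s⟩, huniq⟩ := h2 z w w z h h.symm
  have hss : s * s = 1 := by
    refine rigid h2 h ?_ ?_ <;> rw [mul_smul]
    · rw [h1, h2s]
    · rw [h2s, h1]
  refine ⟨s, ⟨h1, h2s⟩, ⟨hss, ?_⟩, fun s' a b => huniq s' ⟨a, b⟩⟩
  rintro rfl
  rw [one_smul] at h1; exact h h1

noncomputable def swp (h2 : Sharp2 G X) {z w : X} (h : z ≠ w) : G := (swap_ex h2 h).choose

lemma swp_fst (h2 : Sharp2 G X) {z w : X} (h : z ≠ w) : swp h2 h • z = w :=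
  (swap_ex h2 h).choose_spec.1.1

lemma swp_snd (h2 : Sharp2 G X) {z w : X} (h : z ≠ w) : swp h2 h • w = z :=
  (swap_ex h2 h).choose_spec.1.2

lemma swp_sq (h2 : Sharp2 G X) {z w : X} (h : z ≠ w) : swp h2 h * swp h2 h = 1 :=
  (swap_ex h2 h).choose_spec.2.1.1

lemma swp_ne_one (h2 : Sharp2 G X) {z w : X} (h : z ≠ w) : swp h2 h ≠ 1 :=
  (swap_ex h2 h).choose_spec.2.1.2

lemma swp_uniq (h2 : Sharp2 G X) {z w : X} (h : z ≠ w) {s : G}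
    (h1 : s • z = w) (h2' : s • w = z) : s = swp h2 h :=
  (swap_ex h2 h).choose_spec.2.2 s h1 h2'

/-- involutions swap -/
lemma invo_swap {s : G} (hs : s * s = 1) {z w : X} (h : s • z = w) : s • w = z := by
  rw [← h, ← mul_smul, hs, one_smul]

open scoped Classical in
noncomputable def fixpt (x₀ : X) (g : G) : X :=
  if h : ∃ z : X, g • z = z then h.choose else x₀

open scoped Classical in
lemma fixpt_spec {g : G} (h : ∃ z : X, g • z = z) (x₀ : X) :
    g • fixpt x₀ g = fixpt x₀ g := by
  rw [fixpt, dif_pos h]; exact h.choose_spec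

lemma fixpt_eq (h2 : Sharp2 G X) {g : G} (hg1 : g ≠ 1) {z : X} (hz : g • z = z) (x₀ : X) :
    fixpt x₀ g = z := by
  by_contra hne
  exact hg1 (rigid h2 hne (fixpt_spec ⟨z, hz⟩ x₀) hz)

lemma finX [Finite G] (h2 : Sharp2 G X) {a b : X} (hab : a ≠ b) : Finite X := by
  classical
  haveI : Fintype G := Fintype.ofFinite G
  refine Finite.of_injective
    (fun y : X => if h : a = y then (none : Option G) else some (swp h2 h)) ?_
  intro y y' hyy'
  dsimp only at hyy'
  by_cases h : a = y <;> by_cases h' : a = y'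
  · exact h.symm.trans h'
  · rw [dif_pos h, dif_neg h'] at hyy'; exact absurd hyy' (by simp)
  · rw [dif_neg h, dif_pos h'] at hyy'; exact absurd hyy' (by simp)
  · rw [dif_neg h, dif_neg h'] at hyy'
    have e := Option.some_injective _ hyy'
    have hy : swp h2 h • a = y := swp_fst h2 h
    rw [e] at hy
    rw [← hy, swp_fst]


open Finset in
/-- the involutions not fixing `a` are in bijection with `X \ {a}` -/
lemma card_invo_not_fix [Fintype G] [Fintype X] [DecidableEq G] [DecidableEq X]
    (h2 : Sharp2 G X) (a : X) :
    (Finset.univ.filter (fun s : G => (s ≠ 1 ∧ s * s = 1) ∧ s • a ≠ a)).card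
      = Fintype.card X - 1 := by
  have key : (Finset.univ.filter (fun s : G => (s ≠ 1 ∧ s * s = 1) ∧ s • a ≠ a)).card
      = (Finset.univ.erase a).card := by
    refine Finset.card_bij' (fun s _ => s • a)
      (fun y hy => swp h2 (show a ≠ y from Ne.symm (Finset.mem_erase.mp hy).1)) ?_ ?_ ?_ ?_
    · intro s hs
      rw [Finset.mem_filter] at hs
      exact Finset.mem_erase.mpr ⟨hs.2.2, Finset.mem_univ _⟩
    · intro y hy
      have hay : a ≠ y := Ne.symm (Finset.mem_erase.mp hy).1
      rw [Finset.mem_filter]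
      refine ⟨Finset.mem_univ _, ⟨swp_ne_one h2 hay, swp_sq h2 hay⟩, ?_⟩
      rw [swp_fst h2 hay]; exact Ne.symm hay
    · intro s hs
      rw [Finset.mem_filter] at hs
      have hay : a ≠ s • a := Ne.symm hs.2.2
      exact (swp_uniq h2 hay rfl (invo_swap hs.2.1.2 rfl)).symm
    · intro y hy
      exact swp_fst h2 _
  rw [key, Finset.card_erase_of_mem (Finset.mem_univ a), Finset.card_univ]

open Finset in
/-- at most `n - 2` involutions fix `a` -/
lemma card_fix_le [Fintype G] [Fintype X] [DecidableEq G] [DecidableEq X]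
    (h2 : Sharp2 G X) {a b : X} (hba : b ≠ a) :
    (Finset.univ.filter (fun s : G => (s ≠ 1 ∧ s * s = 1) ∧ s • a = a)).card
      ≤ Fintype.card X - 2 := by
  have h1 : ((Finset.univ.erase a).erase b).card = Fintype.card X - 2 := by
    rw [Finset.card_erase_of_mem (Finset.mem_erase.mpr ⟨hba, Finset.mem_univ _⟩),
      Finset.card_erase_of_mem (Finset.mem_univ a), Finset.card_univ]
    omega
  rw [← h1]
  refine Finset.card_le_card_of_injOn (fun s => s • b) ?_ ?_
  · intro s hs
    rw [Finset.mem_coe, Finset.mem_filter] at hs; rw [Finset.mem_coe]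
    obtain ⟨-, ⟨hs1, hs2⟩, hsa⟩ := hs
    refine Finset.mem_erase.mpr ⟨?_, Finset.mem_erase.mpr ⟨?_, Finset.mem_univ _⟩⟩
    · intro h  -- s • b = b would make s fix a and b
      exact hs1 (rigid h2 (Ne.symm hba) hsa h)
    · intro h  -- s • b = a = s • a forces b = a
      rw [← hsa] at h
      exact hba (smul_left_cancel_iff s |>.mp h)
  · intro s hs s' hs' hss'
    simp only [Finset.coe_filter, Set.mem_setOf_eq] at hs hs'
    dsimp only at hss'
    have hab' : a ≠ b := Ne.symm hba
    have hasb : a ≠ s • b := by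
      intro h
      rw [← hs.2.2] at h
      exact hab' (smul_left_cancel_iff s |>.mp h.symm).symm
    rw [tr_uniq h2 hab' hasb hs.2.2 rfl, tr_uniq h2 hab' hasb hs'.2.2 hss'.symm]


/-- sharp existence/uniqueness of a fixed-point-free element with prescribed value -/
lemma exu_fpf [Finite G] (h2 : Sharp2 G X) {a b : X} (hab : a ≠ b) {x y : X} (hxy : x ≠ y) :
    ∃! g : G, (∀ z : X, g • z ≠ z) ∧ g • x = y := by
  classical
  haveI : Finite X := finX h2 hab
  haveI : Fintype X := Fintype.ofFinite X
  haveI : Fintype G := Fintype.ofFinite G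
  obtain ⟨b', hb'⟩ := pick hab x
  have hxb' : x ≠ b' := Ne.symm hb'
  set n := Fintype.card X with hn
  have hn2 : 2 ≤ n := Fintype.one_lt_card_iff_nontrivial.mpr ⟨⟨a, b, hab⟩⟩
  set S : Finset G := Finset.univ.filter (fun g : G => g • x = y) with hS
  set Sfix : Finset G := S.filter (fun g : G => ∃ z : X, g • z = z) with hSfix
  have hmemS : ∀ g : G, g ∈ S ↔ g • x = y := by
    intro g; rw [hS, Finset.mem_filter]; simp
  have cardS : S.card = n - 1 := by
    have key : S.card = (Finset.univ.erase y).card := by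
      refine Finset.card_bij' (fun g _ => g • b')
        (fun w hw => tr h2 hxb' (show y ≠ w from Ne.symm (Finset.mem_erase.mp hw).1)) ?_ ?_ ?_ ?_
      · intro g hg
        refine Finset.mem_erase.mpr ⟨?_, Finset.mem_univ _⟩
        intro h
        rw [← (hmemS g).mp hg] at h
        exact hxb' (smul_left_cancel_iff g |>.mp h.symm)
      · intro w hw
        exact (hmemS _).mpr (tr_fst h2 _ _)
      · intro g hg
        exact (tr_uniq h2 hxb' _ ((hmemS g).mp hg) rfl).symm
      · intro w hw
        exact tr_snd h2 _ _
    rw [key, Finset.card_erase_of_mem (Finset.mem_univ y), Finset.card_univ]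
  have cardSfix : Sfix.card = n - 2 := by
    have key : Sfix.card = ((Finset.univ.erase x).erase y).card := by
      refine Finset.card_bij' (fun g _ => fixpt x g)
        (fun w hw => tr h2 (show x ≠ w from Ne.symm (Finset.mem_erase.mp
            (Finset.mem_of_mem_erase hw)).1)
          (show y ≠ w from Ne.symm (Finset.mem_erase.mp hw).1)) ?_ ?_ ?_ ?_
      · intro g hg
        have hex : ∃ z : X, g • z = z := (Finset.mem_filter.mp hg).2
        have hgx : g • x = y := (hmemS g).mp (Finset.mem_of_mem_filter g hg)
        have hz : g • fixpt x g = fixpt x g := fixpt_spec hex x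
        have hzx : fixpt x g ≠ x := by
          intro h
          rw [h, hgx] at hz; exact hxy hz.symm
        have hzy : fixpt x g ≠ y := by
          intro h
          rw [h] at hz
          have hz2 : g • y = g • x := by rw [hgx]; exact hz
          exact hxy (smul_left_cancel_iff g |>.mp hz2).symm
        exact Finset.mem_erase.mpr ⟨hzy, Finset.mem_erase.mpr ⟨hzx, Finset.mem_univ _⟩⟩
      · intro w hw
        exact Finset.mem_filter.mpr ⟨(hmemS _).mpr (tr_fst h2 _ _), ⟨w, tr_snd h2 _ _⟩⟩
      · intro g hg
        have hex : ∃ z : X, g • z = z := (Finset.mem_filter.mp hg).2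
        have hgx : g • x = y := (hmemS g).mp (Finset.mem_of_mem_filter g hg)
        exact (tr_uniq h2 _ _ hgx (fixpt_spec hex x)).symm
      · intro w hw
        have hxw : x ≠ w := Ne.symm (Finset.mem_erase.mp (Finset.mem_of_mem_erase hw)).1
        have hyw : y ≠ w := Ne.symm (Finset.mem_erase.mp hw).1
        have htne : tr h2 hxw hyw ≠ 1 := by
          intro hcon
          have := tr_fst h2 hxw hyw
          rw [hcon, one_smul] at this
          exact hxy this
        exact fixpt_eq h2 htne (tr_snd h2 hxw hyw) x
    rw [key, Finset.card_erase_of_mem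
        (Finset.mem_erase.mpr ⟨Ne.symm hxy, Finset.mem_univ _⟩),
      Finset.card_erase_of_mem (Finset.mem_univ x), Finset.card_univ]
    omega
  have hsub : Sfix ⊆ S := Finset.filter_subset _ _
  -- existence
  have hne : (S \ Sfix).Nonempty := by
    rw [Finset.sdiff_nonempty]
    intro hcon
    have := Finset.card_le_card hcon
    omega
  obtain ⟨g, hg⟩ := hne
  rw [Finset.mem_sdiff] at hg
  have hgfpf : ∀ z : X, g • z ≠ z := by
    intro z hz
    exact hg.2 (Finset.mem_filter.mpr ⟨hg.1, ⟨z, hz⟩⟩)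
  have hgx : g • x = y := (hmemS g).mp hg.1
  refine ⟨g, ⟨hgfpf, hgx⟩, ?_⟩
  intro g' hg'
  by_contra hne'
  have hg'S : g' ∈ S := (hmemS g').mpr hg'.2
  have hg'fix : g' ∉ Sfix := by
    intro hcon
    obtain ⟨z, hz⟩ := (Finset.mem_filter.mp hcon).2
    exact hg'.1 z hz
  have hins : insert g' (insert g Sfix) ⊆ S := by
    intro v hv
    rcases Finset.mem_insert.mp hv with rfl | hv
    · exact hg'S
    rcases Finset.mem_insert.mp hv with rfl | hv
    · exact hg.1
    · exact hsub hv
  have hcard : (insert g' (insert g Sfix)).card = n := by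
    rw [Finset.card_insert_of_notMem, Finset.card_insert_of_notMem]
    · omega
    · intro hcon
      obtain ⟨z, hz⟩ := (Finset.mem_filter.mp hcon).2
      exact hgfpf z hz
    · intro hcon
      rcases Finset.mem_insert.mp hcon with rfl | hcon
      · exact hne' rfl
      · exact hg'fix hcon
  have := Finset.card_le_card hins
  omega


/-- no point is fixed by two distinct involutions -/
lemma invo_fix_unique [Finite G] (h2 : Sharp2 G X) {a b : X} (hab : a ≠ b)
    {s u : G} (hs1 : s ≠ 1) (hs2 : s * s = 1) (hu1 : u ≠ 1) (hu2 : u * u = 1)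
    {z : X} (hsz : s • z = z) (huz : u • z = z) : s = u := by
  classical
  by_contra hsu
  haveI : Finite X := finX h2 hab
  haveI : Fintype X := Fintype.ofFinite X
  haveI : Fintype G := Fintype.ofFinite G
  set n := Fintype.card X with hn
  have hn2 : 2 ≤ n := Fintype.one_lt_card_iff_nontrivial.mpr ⟨⟨a, b, hab⟩⟩
  -- every point is fixed by at least two distinct involutions (by conjugation)
  have conjpt : ∀ p : X, ∃ v w : G,
      ((v ≠ 1 ∧ v * v = 1) ∧ v • p = p) ∧ ((w ≠ 1 ∧ w * w = 1) ∧ w • p = p) ∧ v ≠ w := by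
    intro p
    obtain ⟨g, hg⟩ : ∃ g : G, g • z = p := by
      rcases eq_or_ne z p with rfl | hzp
      · exact ⟨1, one_smul G z⟩
      · obtain ⟨z', hz'⟩ := pick hab z
        obtain ⟨p', hp'⟩ := pick hab p
        rcases eq_or_ne z' p' with rfl | hz'p'
        · exact ⟨tr h2 (Ne.symm hz') (Ne.symm hp'), tr_fst h2 _ _⟩
        · exact ⟨tr h2 (Ne.symm hz') (Ne.symm hp'), tr_fst h2 _ _⟩
    have hconj : ∀ v : G, v ≠ 1 → v * v = 1 → v • z = z →
        ((g * v * g⁻¹) ≠ 1 ∧ (g * v * g⁻¹) * (g * v * g⁻¹) = 1) ∧ (g * v * g⁻¹) • p = p := by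
      intro v hv1 hv2 hvz
      refine ⟨⟨?_, ?_⟩, ?_⟩
      · intro hcon
        apply hv1
        have : v = g⁻¹ * (g * v * g⁻¹) * g := by group
        rw [hcon] at this
        simpa using this
      · have : (g * v * g⁻¹) * (g * v * g⁻¹) = g * (v * v) * g⁻¹ := by group
        rw [this, hv2]
        group
      · have hginv : g⁻¹ • p = z := by rw [← hg, inv_smul_smul]
        rw [mul_smul, mul_smul, hginv, hvz, hg]
    refine ⟨g * s * g⁻¹, g * u * g⁻¹, hconj s hs1 hs2 hsz, hconj u hu1 hu2 huz, ?_⟩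
    intro hcon
    apply hsu
    have e1 : s = g⁻¹ * (g * s * g⁻¹) * g := by group
    have e2 : g⁻¹ * (g * u * g⁻¹) * g = u := by group
    rw [e1, hcon, e2]
  -- Finset bookkeeping
  set IF : Finset G := Finset.univ.filter (fun v : G => v ≠ 1 ∧ v * v = 1) with hIF
  set T : Finset G := IF.filter (fun v : G => ∃ p : X, v • p = p) with hT
  have fibeq : ∀ p : X, T.filter (fun v : G => fixpt z v = p)
      = Finset.univ.filter (fun v : G => (v ≠ 1 ∧ v * v = 1) ∧ v • p = p) := by
    intro p
    ext v
    simp only [hT, hIF, Finset.mem_filter, Finset.mem_univ, true_and]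
    constructor
    · rintro ⟨⟨hv, hex⟩, hfix⟩
      refine ⟨hv, ?_⟩
      rw [← hfix]
      exact fixpt_spec hex z
    · rintro ⟨hv, hp⟩
      exact ⟨⟨hv, ⟨p, hp⟩⟩, fixpt_eq h2 hv.1 hp z⟩
  have sumT : T.card = ∑ p ∈ Finset.univ, (T.filter (fun v : G => fixpt z v = p)).card :=
    Finset.card_eq_sum_card_fiberwise (fun v _ => Finset.mem_univ (fixpt z v))
  have lower : 2 * n ≤ T.card := by
    rw [sumT]
    calc 2 * n = ∑ _p ∈ (Finset.univ : Finset X), 2 := by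
          rw [Finset.sum_const, Finset.card_univ, smul_eq_mul, mul_comm]
      _ ≤ _ := by
          refine Finset.sum_le_sum ?_
          intro p _
          rw [fibeq p]
          obtain ⟨v, w, hv, hw, hvw⟩ := conjpt p
          refine Finset.one_lt_card_iff.mpr
            ⟨v, w, Finset.mem_filter.mpr ⟨Finset.mem_univ _, hv⟩,
              Finset.mem_filter.mpr ⟨Finset.mem_univ _, hw⟩, hvw⟩
  have hTIF : T.card ≤ IF.card := Finset.card_le_card (Finset.filter_subset _ _)
  -- split IF at the point z
  have split : (IF.filter (fun v : G => v • z = z)).card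
      + (IF.filter (fun v : G => ¬ v • z = z)).card = IF.card :=
    Finset.card_filter_add_card_filter_not _
  have e1 : IF.filter (fun v : G => v • z = z)
      = Finset.univ.filter (fun v : G => (v ≠ 1 ∧ v * v = 1) ∧ v • z = z) := by
    rw [hIF, Finset.filter_filter]
  have e2 : IF.filter (fun v : G => ¬ v • z = z)
      = Finset.univ.filter (fun v : G => (v ≠ 1 ∧ v * v = 1) ∧ v • z ≠ z) := by
    rw [hIF, Finset.filter_filter]
  obtain ⟨b', hb'⟩ := pick hab z
  have hfixle : (IF.filter (fun v : G => v • z = z)).card ≤ n - 2 := by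
    rw [e1]; exact card_fix_le h2 hb'
  have hnotfix : (IF.filter (fun v : G => ¬ v • z = z)).card = n - 1 := by
    rw [e2]; exact card_invo_not_fix h2 z
  omega


/-- involutions agreeing at one point are equal -/
lemma invo_agree [Finite G] (h2 : Sharp2 G X) {a b : X} (hab : a ≠ b)
    {s u : G} (hs1 : s ≠ 1) (hs2 : s * s = 1) (hu1 : u ≠ 1) (hu2 : u * u = 1)
    {p : X} (h : s • p = u • p) : s = u := by
  rcases eq_or_ne (s • p) p with hp | hp
  · exact invo_fix_unique h2 hab hs1 hs2 hu1 hu2 hp (h ▸ hp)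
  · have hpw : p ≠ s • p := Ne.symm hp
    rw [swp_uniq h2 hpw rfl (invo_swap hs2 rfl),
      swp_uniq h2 hpw h.symm (invo_swap hu2 h.symm)]

/-- the product of two involutions is trivial or fixed-point-free -/
lemma prod_mem [Finite G] (h2 : Sharp2 G X) {a b : X} (hab : a ≠ b)
    {s u : G} (hs1 : s ≠ 1) (hs2 : s * s = 1) (hu1 : u ≠ 1) (hu2 : u * u = 1) :
    s * u = 1 ∨ ∀ z : X, (s * u) • z ≠ z := by
  rcases eq_or_ne s u with rfl | hsu
  · exact Or.inl hs2
  · refine Or.inr fun z hz => hsu ?_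
    rw [mul_smul] at hz
    exact invo_agree h2 hab hs1 hs2 hu1 hu2 (invo_swap hs2 hz)


/-- if some involution `t` fixes a point, then every element of the Frobenius kernel
is of the form `s * t` with `s` an involution -/
lemma rep [Finite G] (h2 : Sharp2 G X) {a b : X} (hab : a ≠ b)
    {t : G} {c : X} (ht1 : t ≠ 1) (ht2 : t * t = 1) (htc : t • c = c)
    {g : G} (hg : g = 1 ∨ ∀ z : X, g • z ≠ z) :
    ∃ s : G, (s ≠ 1 ∧ s * s = 1) ∧ g = s * t := by
  classical
  haveI : Finite X := finX h2 hab
  haveI : Fintype X := Fintype.ofFinite X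
  haveI : Fintype G := Fintype.ofFinite G
  set n := Fintype.card X with hn
  have hn2 : 2 ≤ n := Fintype.one_lt_card_iff_nontrivial.mpr ⟨⟨a, b, hab⟩⟩
  set IF : Finset G := Finset.univ.filter (fun v : G => v ≠ 1 ∧ v * v = 1) with hIF
  set KF : Finset G := Finset.univ.filter
    (fun g : G => g = 1 ∨ ∀ z : X, g • z ≠ z) with hKF
  -- |KF| = n
  have cardKF : KF.card = n := by
    have key : KF.card = (Finset.univ : Finset X).card := by
      refine Finset.card_bij' (fun g _ => g • a)
        (fun y _ => if h : a = y then 1 else (exu_fpf h2 hab h).choose) ?_ ?_ ?_ ?_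
      · intro g _; exact Finset.mem_univ _
      · intro y _
        dsimp only
        rcases eq_or_ne a y with h | h
        · rw [dif_pos h]
          exact Finset.mem_filter.mpr ⟨Finset.mem_univ _, Or.inl rfl⟩
        · rw [dif_neg h]
          exact Finset.mem_filter.mpr
            ⟨Finset.mem_univ _, Or.inr (exu_fpf h2 hab h).choose_spec.1.1⟩
      · intro g hg'
        dsimp only
        rcases (Finset.mem_filter.mp hg').2 with rfl | hfpf
        · rw [one_smul, dif_pos rfl]
        · have hne : a ≠ g • a := Ne.symm (hfpf a)
          rw [dif_neg hne]
          exact ((exu_fpf h2 hab hne).choose_spec.2 g ⟨hfpf, rfl⟩).symm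
      · intro y _
        dsimp only
        rcases eq_or_ne a y with h | h
        · rw [dif_pos h, one_smul]; exact h.symm ▸ rfl
        · rw [dif_neg h]
          exact (exu_fpf h2 hab h).choose_spec.1.2
    rw [key, Finset.card_univ]
  -- |IF| = n
  have cardIF : IF.card = n := by
    have split : (IF.filter (fun v : G => v • c = c)).card
        + (IF.filter (fun v : G => ¬ v • c = c)).card = IF.card :=
      Finset.card_filter_add_card_filter_not _
    have e2 : IF.filter (fun v : G => ¬ v • c = c)
        = Finset.univ.filter (fun v : G => (v ≠ 1 ∧ v * v = 1) ∧ v • c ≠ c) := by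
      rw [hIF, Finset.filter_filter]
    have hnotfix : (IF.filter (fun v : G => ¬ v • c = c)).card = n - 1 := by
      rw [e2]; exact card_invo_not_fix h2 c
    have hfix : IF.filter (fun v : G => v • c = c) = {t} := by
      ext v
      simp only [Finset.mem_filter, Finset.mem_singleton, hIF, Finset.mem_univ, true_and]
      constructor
      · rintro ⟨⟨hv1, hv2⟩, hvc⟩
        exact invo_fix_unique h2 hab hv1 hv2 ht1 ht2 hvc htc
      · rintro rfl
        exact ⟨⟨ht1, ht2⟩, htc⟩
    rw [hfix, Finset.card_singleton] at split
    omega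
  -- the image of IF under right multiplication by t is KF
  have him : IF.image (fun s : G => s * t) = KF := by
    refine Finset.eq_of_subset_of_card_le ?_ ?_
    · intro v hv
      obtain ⟨s, hs, rfl⟩ := Finset.mem_image.mp hv
      obtain ⟨hs1, hs2⟩ := (Finset.mem_filter.mp hs).2
      exact Finset.mem_filter.mpr ⟨Finset.mem_univ _, prod_mem h2 hab hs1 hs2 ht1 ht2⟩
    · rw [Finset.card_image_of_injective _ (mul_left_injective t), cardIF, cardKF]
  have hgKF : g ∈ KF := Finset.mem_filter.mpr ⟨Finset.mem_univ _, hg⟩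
  rw [← him] at hgKF
  obtain ⟨s, hs, hst⟩ := Finset.mem_image.mp hgKF
  exact ⟨s, (Finset.mem_filter.mp hs).2, hst.symm⟩


lemma main [Finite G] (h2 : Sharp2 G X) {a b : X} (hab : a ≠ b) :
    ∃ N : Subgroup G, N.Normal ∧ N ≠ ⊥ ∧ ∀ x ∈ N, ∀ y ∈ N, x * y = y * x := by
  classical
  have key : (∀ g h : G, (g = 1 ∨ ∀ z : X, g • z ≠ z) → (h = 1 ∨ ∀ z : X, h • z ≠ z) →
        (g * h = 1 ∨ ∀ z : X, (g * h) • z ≠ z)) ∧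
      (∀ g h : G, (g = 1 ∨ ∀ z : X, g • z ≠ z) → (h = 1 ∨ ∀ z : X, h • z ≠ z) →
        g * h = h * g) := by
    by_cases hcase : ∃ t : G, (t ≠ 1 ∧ t * t = 1) ∧ ∃ c : X, t • c = c
    · -- some involution fixes a point
      obtain ⟨t, ⟨ht1, ht2⟩, c, htc⟩ := hcase
      have hrep : ∀ g : G, (g = 1 ∨ ∀ z : X, g • z ≠ z) →
          ∃ s : G, (s ≠ 1 ∧ s * s = 1) ∧ g = s * t :=
        fun g hg => rep h2 hab ht1 ht2 htc hg
      have hconj : ∀ s : G, s ≠ 1 → s * s = 1 →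
          (t * s * t ≠ 1 ∧ (t * s * t) * (t * s * t) = 1) := by
        intro s hs1 hs2
        constructor
        · intro hcon
          apply hs1
          have e : s = t⁻¹ * (t * s * t) * t⁻¹ := by group
          rw [hcon] at e
          simpa [inv_eq_of_mul_eq_one_right ht2, ht2] using e
        · have e : (t * s * t) * (t * s * t) = t * s * (t * t) * s * t := by group
          rw [e, ht2, mul_one]
          have e2 : t * s * s * t = t * (s * s) * t := by group
          rw [e2, hs2, mul_one, ht2]
      have hmul : ∀ g h : G, (g = 1 ∨ ∀ z : X, g • z ≠ z) →
          (h = 1 ∨ ∀ z : X, h • z ≠ z) → (g * h = 1 ∨ ∀ z : X, (g * h) • z ≠ z) := by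
        intro g h hg hh
        rcases hg with rfl | hgf
        · rw [one_mul]; exact hh
        rcases hh with rfl | hhf
        · rw [mul_one]; exact Or.inr hgf
        obtain ⟨s, ⟨hs1, hs2⟩, rfl⟩ := hrep _ (Or.inr hgf)
        obtain ⟨s', ⟨hs'1, hs'2⟩, rfl⟩ := hrep _ (Or.inr hhf)
        have e : (s * t) * (s' * t) = s * (t * s' * t) := by group
        rw [e]
        obtain ⟨hc1, hc2⟩ := hconj s' hs'1 hs'2
        exact prod_mem h2 hab hs1 hs2 hc1 hc2
      have hinv : ∀ g : G, (g = 1 ∨ ∀ z : X, g • z ≠ z) → t * g * t = g⁻¹ := by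
        intro g hg
        rcases hg with rfl | hgf
        · rw [mul_one, ht2, inv_one]
        obtain ⟨s, ⟨hs1, hs2⟩, rfl⟩ := hrep _ (Or.inr hgf)
        have e : t * (s * t) * t = t * s * (t * t) := by group
        rw [e, ht2, mul_one, mul_inv_rev, inv_eq_of_mul_eq_one_right ht2,
          inv_eq_of_mul_eq_one_right hs2]
      refine ⟨hmul, ?_⟩
      intro g h hg hh
      have h1 : t * (g * h) * t = (g * h)⁻¹ := hinv _ (hmul g h hg hh)
      have e : (t * g * t) * (t * h * t) = t * (g * h) * t := by
        have e0 : (t * g * t) * (t * h * t) = t * (g * (t * t) * h) * t := by group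
        rw [e0, ht2, mul_one]
      have h3 : h⁻¹ * g⁻¹ = g⁻¹ * h⁻¹ := by
        calc h⁻¹ * g⁻¹ = (g * h)⁻¹ := (mul_inv_rev g h).symm
          _ = t * (g * h) * t := h1.symm
          _ = (t * g * t) * (t * h * t) := e.symm
          _ = g⁻¹ * h⁻¹ := by rw [hinv g hg, hinv h hh]
      have h4 := congrArg (fun x : G => x⁻¹) h3
      simpa [mul_inv_rev] using h4
    · -- no involution fixes a point
      have hfpf : ∀ s : G, s ≠ 1 → s * s = 1 → ∀ z : X, s • z ≠ z := by
        intro s hs1 hs2 z hz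
        exact hcase ⟨s, ⟨hs1, hs2⟩, z, hz⟩
      have hsq : ∀ g : G, (g = 1 ∨ ∀ z : X, g • z ≠ z) → g * g = 1 := by
        intro g hg
        rcases hg with rfl | hgf
        · rw [mul_one]
        have hga : a ≠ g • a := Ne.symm (hgf a)
        have hsf : ∀ z : X, swp h2 hga • z ≠ z :=
          hfpf _ (swp_ne_one h2 hga) (swp_sq h2 hga)
        have hgs : g = swp h2 hga :=
          ((exu_fpf h2 hab hga).choose_spec.2 g ⟨hgf, rfl⟩).trans
            ((exu_fpf h2 hab hga).choose_spec.2 _ ⟨hsf, swp_fst h2 hga⟩).symm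
        rw [hgs]
        exact swp_sq h2 hga
      have hne1 : ∀ g : G, (∀ z : X, g • z ≠ z) → g ≠ 1 := by
        rintro g hgf rfl
        exact hgf a (one_smul G a)
      have hmul : ∀ g h : G, (g = 1 ∨ ∀ z : X, g • z ≠ z) →
          (h = 1 ∨ ∀ z : X, h • z ≠ z) → (g * h = 1 ∨ ∀ z : X, (g * h) • z ≠ z) := by
        intro g h hg hh
        rcases hg with rfl | hgf
        · rw [one_mul]; exact hh
        rcases hh with rfl | hhf
        · rw [mul_one]; exact Or.inr hgf
        exact prod_mem h2 hab (hne1 g hgf) (hsq g (Or.inr hgf))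
          (hne1 h hhf) (hsq h (Or.inr hhf))
      refine ⟨hmul, ?_⟩
      intro g h hg hh
      have e1 : g * h = (g * h)⁻¹ := eq_inv_of_mul_eq_one_left (hsq _ (hmul g h hg hh))
      rw [e1, mul_inv_rev, inv_eq_of_mul_eq_one_right (hsq h hh),
        inv_eq_of_mul_eq_one_right (hsq g hg)]
  obtain ⟨hmul, hcomm⟩ := key
  have hinvmem : ∀ g : G, (g = 1 ∨ ∀ z : X, g • z ≠ z) →
      (g⁻¹ = 1 ∨ ∀ z : X, g⁻¹ • z ≠ z) := by
    rintro g (rfl | hgf)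
    · exact Or.inl inv_one
    · refine Or.inr fun z hz => ?_
      have h' := congrArg (fun w => g • w) hz
      simp only [smul_inv_smul] at h'
      exact hgf z h'.symm
  let N : Subgroup G :=
    { carrier := {g : G | g = 1 ∨ ∀ z : X, g • z ≠ z}
      one_mem' := Or.inl rfl
      mul_mem' := fun {g h} hg hh => hmul g h hg hh
      inv_mem' := fun {g} hg => hinvmem g hg }
  have hmemN : ∀ g : G, g ∈ N ↔ (g = 1 ∨ ∀ z : X, g • z ≠ z) := fun g => Iff.rfl
  refine ⟨N, ⟨?_⟩, ?_, ?_⟩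
  · intro g hg h
    rcases (hmemN g).mp hg with rfl | hgf
    · refine (hmemN _).mpr (Or.inl ?_)
      simp
    · refine (hmemN _).mpr (Or.inr fun z hz => ?_)
      rw [mul_smul, mul_smul] at hz
      have h' := congrArg (fun w => h⁻¹ • w) hz
      simp only [inv_smul_smul] at h'
      exact hgf _ h'
  · obtain ⟨g0, ⟨hg0f, -⟩, -⟩ := exu_fpf h2 hab hab
    intro hbot
    have hg0 : g0 ∈ N := (hmemN g0).mpr (Or.inr hg0f)
    rw [hbot, Subgroup.mem_bot] at hg0
    exact hg0f a (hg0 ▸ one_smul G a)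
  · intro x hx y hy
    exact hcomm x y ((hmemN x).mp hx) ((hmemN y).mp hy)

end Stmt18Aux

/-- Point stabilisers of finite sharply 3-transitive groups are sharply
2-transitive (on the complement of the point), and every finite sharply
2-transitive group has a non-trivial normal abelian subgroup. -/
theorem stmt_18 :
    (∀ (G X : Type) [Group G] [Finite G] [MulAction G X],
      (∃ a b c : X, a ≠ b ∧ a ≠ c ∧ b ≠ c) →
      (∀ x₁ x₂ x₃ y₁ y₂ y₃ : X, x₁ ≠ x₂ → x₁ ≠ x₃ → x₂ ≠ x₃ →
        y₁ ≠ y₂ → y₁ ≠ y₃ → y₂ ≠ y₃ →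
        ∃! g : G, g • x₁ = y₁ ∧ g • x₂ = y₂ ∧ g • x₃ = y₃) →
      ∀ x : X, ∀ y₁ y₂ z₁ z₂ : X, y₁ ≠ x → y₂ ≠ x → z₁ ≠ x → z₂ ≠ x →
        y₁ ≠ y₂ → z₁ ≠ z₂ →
        ∃! g : MulAction.stabilizer G x, (g : G) • y₁ = z₁ ∧ (g : G) • y₂ = z₂) ∧
    (∀ (G X : Type) [Group G] [Finite G] [MulAction G X],
      (∃ a b : X, a ≠ b) →
      (∀ x₁ x₂ y₁ y₂ : X, x₁ ≠ x₂ → y₁ ≠ y₂ →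
        ∃! g : G, g • x₁ = y₁ ∧ g • x₂ = y₂) →
      ∃ N : Subgroup G, N.Normal ∧ N ≠ ⊥ ∧ ∀ a ∈ N, ∀ b ∈ N, a * b = b * a) := by
  constructor
  · intro G X _ _ _ _h3pts h3 x y₁ y₂ z₁ z₂ hy1 hy2 hz1 hz2 hy hz
    obtain ⟨g, ⟨hgx, hg1, hg2⟩, huniq⟩ :=
      h3 x y₁ y₂ x z₁ z₂ (Ne.symm hy1) (Ne.symm hy2) hy (Ne.symm hz1) (Ne.symm hz2) hz
    refine ⟨⟨g, MulAction.mem_stabilizer_iff.mpr hgx⟩, ⟨hg1, hg2⟩, ?_⟩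
    rintro ⟨h, hh⟩ ⟨hh1, hh2⟩
    exact Subtype.ext (huniq h ⟨MulAction.mem_stabilizer_iff.mp hh, hh1, hh2⟩)
  · intro G X _ _ _ hex h2
    obtain ⟨a, b, hab⟩ := hex
    exact Stmt18Aux.main h2 hab
end
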